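/- arXiv:2212.05994 — 5 statements merged into one kernel-verified Lean document; each statement's English description precedes it below -/
import Mathlib

section
/- Let G = ⟨g⟩ be a cyclic group of order n and let 0 ≤ k < n. The element ζ_k := e + g + g² + ... + g^k of the complex group algebra ℂ[G] is invertible if and only if k+1 is coprime to n. -/
noncomputable section

/-- In the complex group algebra of a cyclic group `G = ⟨g⟩` of order `n`, the element
`ζ_k = e + g + ⋯ + g^k` (with `0 ≤ k < n`) is invertible iff `k+1` is coprime to `n`. -/
theorem zeta_isUnit_iff_coprime (G : Type) [Group G] [Fintype G] (n : ℕ)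
    (hn : Fintype.card G = n) (g : G) (hg : ∀ x : G, x ∈ Subgroup.zpowers g)
    (k : ℕ) (hk : k < n) :
    IsUnit (∑ i ∈ Finset.range (k + 1), MonoidAlgebra.of ℂ G (g ^ i)) ↔
      Nat.Coprime (k + 1) n := by
  classical
  letI : CommGroup G :=
    { (inferInstance : Group G) with
      mul_comm := fun a b => by
        obtain ⟨i, rfl⟩ := hg a
        obtain ⟨j, rfl⟩ := hg b
        rw [← zpow_add, ← zpow_add, add_comm] }
  have hn0 : 0 < n := lt_of_le_of_lt (Nat.zero_le k) hk
  have hord : orderOf g = n := by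
    rw [orderOf_eq_card_of_forall_mem_zpowers hg, Nat.card_eq_fintype_card, hn]
  have hgn : g ^ n = 1 := by rw [← hord]; exact pow_orderOf_eq_one g
  -- generic shift lemma
  have hshift : ∀ ω : ℂ, ω ^ n = 1 →
      ω • (MonoidAlgebra.of ℂ G g * ∑ j ∈ Finset.range n, ω ^ j • MonoidAlgebra.of ℂ G (g ^ j))
        = ∑ j ∈ Finset.range n, ω ^ j • MonoidAlgebra.of ℂ G (g ^ j) := by
    intro ω hω
    set f : ℕ → MonoidAlgebra ℂ G := fun j => ω ^ j • MonoidAlgebra.of ℂ G (g ^ j) with hf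
    have key : ω • (MonoidAlgebra.of ℂ G g *
        ∑ j ∈ Finset.range n, ω ^ j • MonoidAlgebra.of ℂ G (g ^ j))
        = ∑ j ∈ Finset.range n, f (j + 1) := by
      rw [Finset.mul_sum, Finset.smul_sum]
      refine Finset.sum_congr rfl fun j _ => ?_
      rw [mul_smul_comm, smul_smul, ← map_mul, ← pow_succ', hf]
      simp [pow_succ']
    rw [key]
    have h1 : ∑ j ∈ Finset.range (n + 1), f j = ∑ j ∈ Finset.range n, f (j + 1) + f 0 :=
      Finset.sum_range_succ' f n
    have h2 : ∑ j ∈ Finset.range (n + 1), f j = ∑ j ∈ Finset.range n, f j + f n :=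
      Finset.sum_range_succ f n
    have hfn : f n = f 0 := by simp [hf, hω, hgn]
    have := h1.symm.trans h2
    rw [hfn] at this
    exact add_right_cancel this
  constructor
  · -- unit → coprime, by contraposition
    intro hu
    by_contra hcop
    set d : ℕ := Nat.gcd (k + 1) n with hd
    have hd1 : d ≠ 1 := hcop
    have hd0 : d ≠ 0 := by
      simp [hd, Nat.gcd_eq_zero_iff]
    have hd2 : 2 ≤ d := by omega
    have hddvd1 : d ∣ k + 1 := Nat.gcd_dvd_left _ _
    have hddvd2 : d ∣ n := Nat.gcd_dvd_right _ _
    set ω : ℂ := Complex.exp (2 * Real.pi * Complex.I / d) with hω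
    have hprim : IsPrimitiveRoot ω d := Complex.isPrimitiveRoot_exp d hd0
    have hωd : ω ^ d = 1 := hprim.pow_eq_one
    have hωn : ω ^ n = 1 := by
      obtain ⟨c, hc⟩ := hddvd2
      rw [hc, pow_mul, hωd, one_pow]
    have hωk : ω ^ (k + 1) = 1 := by
      obtain ⟨c, hc⟩ := hddvd1
      rw [hc, pow_mul, hωd, one_pow]
    have hωne1 : ω ≠ 1 := by
      intro h
      have h2 : d ∣ 1 := by
        have := (hprim.pow_eq_one_iff_dvd 1).mp (by rw [pow_one, h])
        exact this
      exact hd1 (Nat.dvd_one.mp h2)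
    have hωne0 : ω ≠ 0 := by
      intro h
      rw [h, zero_pow hd0] at hωd
      exact zero_ne_one hωd
    set w : MonoidAlgebra ℂ G := ∑ j ∈ Finset.range n, ω ^ j • MonoidAlgebra.of ℂ G (g ^ j)
      with hw
    have hgw : MonoidAlgebra.of ℂ G g * w = ω⁻¹ • w := by
      have := hshift ω hωn
      rw [← hw] at this
      calc MonoidAlgebra.of ℂ G g * w = ω⁻¹ • (ω • (MonoidAlgebra.of ℂ G g * w)) := by
            rw [smul_smul, inv_mul_cancel₀ hωne0, one_smul]
        _ = ω⁻¹ • w := by rw [this]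
    have hpow : ∀ i : ℕ, MonoidAlgebra.of ℂ G (g ^ i) * w = (ω⁻¹) ^ i • w := by
      intro i
      induction i with
      | zero => simp [← MonoidAlgebra.one_def]
      | succ i ih =>
        rw [pow_succ', map_mul, mul_assoc, ih, mul_smul_comm, hgw, smul_smul, ← pow_succ]
    have hzw : (∑ i ∈ Finset.range (k + 1), MonoidAlgebra.of ℂ G (g ^ i)) * w = 0 := by
      rw [Finset.sum_mul]
      have : ∀ i ∈ Finset.range (k + 1), MonoidAlgebra.of ℂ G (g ^ i) * w = (ω⁻¹) ^ i • w :=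
        fun i _ => hpow i
      rw [Finset.sum_congr rfl this, ← Finset.sum_smul]
      have hne : ω⁻¹ ≠ 1 := by
        intro h; exact hωne1 (by rw [← inv_inv ω, h, inv_one])
      rw [geom_sum_eq hne]
      have : (ω⁻¹) ^ (k + 1) = 1 := by
        rw [inv_pow, hωk, inv_one]
      rw [this]
      simp
    -- w ≠ 0
    have hwne : w ≠ 0 := by
      intro h
      have : w.coeff 1 = 1 := by
        rw [hw]
        rw [MonoidAlgebra.coeff_sum, Finsupp.finset_sum_apply]
        have : ∀ j ∈ Finset.range n,
            (ω ^ j • MonoidAlgebra.of ℂ G (g ^ j)).coeff 1 = if j = 0 then 1 else 0 := by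
          intro j hj
          rw [Finset.mem_range] at hj
          rw [MonoidAlgebra.coeff_smul_apply, MonoidAlgebra.of_apply, MonoidAlgebra.coeff_single_apply]
          by_cases hj0 : j = 0
          · simp [hj0]
          · have hne : g ^ j ≠ 1 := by
              intro hgj
              have hdvd : n ∣ j := hord ▸ orderOf_dvd_of_pow_eq_one hgj
              exact hj0 (Nat.eq_zero_of_dvd_of_lt hdvd hj)
            simp [hne, hj0, Ne.symm hne]
        rw [Finset.sum_congr rfl this, Finset.sum_ite_eq' (Finset.range n) 0 (fun _ => (1:ℂ))]
        simp [hn0]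
      rw [h] at this
      simp at this
    obtain ⟨u, hu'⟩ := hu
    have : w = 0 := by
      calc w = 1 * w := (one_mul w).symm
        _ = (↑u⁻¹ * ↑u) * w := by rw [Units.inv_mul]
        _ = ↑u⁻¹ * (↑u * w) := by rw [mul_assoc]
        _ = ↑u⁻¹ * 0 := by rw [hu', hzw]
        _ = 0 := mul_zero _
    exact hwne this
  · -- coprime → unit
    intro hcop
    rcases eq_or_lt_of_le (show 1 ≤ n from hn0) with h1 | h1
    · -- n = 1
      have hk0 : k = 0 := by omega
      subst hk0
      have : g ^ 0 = 1 := pow_zero g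
      simp [← MonoidAlgebra.one_def]
    -- n ≥ 2
    obtain ⟨m, -, hm⟩ := Nat.exists_mul_mod_eq_one_of_coprime hcop h1
    set t : ℕ := (k + 1) * m / n with ht
    have hmt : (k + 1) * m = n * t + 1 := by
      conv_lhs => rw [← Nat.div_add_mod ((k + 1) * m) n]
      rw [hm, ht]
    set N : MonoidAlgebra ℂ G := ∑ i ∈ Finset.range n, MonoidAlgebra.of ℂ G (g ^ i) with hN
    -- of g * N = N
    have hgN : MonoidAlgebra.of ℂ G g * N = N := by
      have := hshift 1 (one_pow n)
      simpa [hN] using this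
    have hpowN : ∀ i : ℕ, MonoidAlgebra.of ℂ G (g ^ i) * N = N := by
      intro i
      induction i with
      | zero => simp [← MonoidAlgebra.one_def]
      | succ i ih => rw [pow_succ', map_mul, mul_assoc, ih, hgN]
    have hNN : N * N = (n : ℂ) • N := by
      calc N * N = ∑ i ∈ Finset.range n, MonoidAlgebra.of ℂ G (g ^ i) * N := by
            rw [hN, Finset.sum_mul]
        _ = ∑ _i ∈ Finset.range n, N := Finset.sum_congr rfl fun i _ => hpowN i
        _ = n • N := by rw [Finset.sum_const, Finset.card_range]
        _ = (n : ℂ) • N := by rw [Nat.cast_smul_eq_nsmul ℂ]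
    -- sum over full cycles
    have hcycle : ∀ s : ℕ, ∑ r ∈ Finset.range (n * s), MonoidAlgebra.of ℂ G (g ^ r)
        = s • N := by
      intro s
      induction s with
      | zero => simp
      | succ s ih =>
        have : n * (s + 1) = n * s + n := by ring
        rw [this, Finset.sum_range_add, ih]
        have : ∀ i ∈ Finset.range n,
            MonoidAlgebra.of ℂ G (g ^ (n * s + i)) = MonoidAlgebra.of ℂ G (g ^ i) := by
          intro i _
          congr 1
          rw [pow_add, pow_mul, hgn, one_pow, one_mul]
        rw [Finset.sum_congr rfl this, ← hN, succ_nsmul]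
    -- ζ * η = full sum
    set η : MonoidAlgebra ℂ G := ∑ j ∈ Finset.range m, MonoidAlgebra.of ℂ G (g ^ ((k + 1) * j))
      with hη
    have hζη : (∑ i ∈ Finset.range (k + 1), MonoidAlgebra.of ℂ G (g ^ i)) * η
        = ∑ r ∈ Finset.range ((k + 1) * m), MonoidAlgebra.of ℂ G (g ^ r) := by
      rw [hη, Finset.mul_sum]
      have key : ∀ j : ℕ,
          (∑ i ∈ Finset.range (k + 1), MonoidAlgebra.of ℂ G (g ^ i)) *
            MonoidAlgebra.of ℂ G (g ^ ((k + 1) * j))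
          = ∑ i ∈ Finset.range (k + 1), MonoidAlgebra.of ℂ G (g ^ ((k + 1) * j + i)) := by
        intro j
        rw [Finset.sum_mul]
        refine Finset.sum_congr rfl fun i _ => ?_
        rw [← map_mul, ← pow_add, add_comm]
      rw [Finset.sum_congr rfl fun j _ => key j]
      have hgeom : ∀ M : ℕ,
          ∑ j ∈ Finset.range M, ∑ i ∈ Finset.range (k + 1),
            MonoidAlgebra.of ℂ G (g ^ ((k + 1) * j + i))
          = ∑ r ∈ Finset.range ((k + 1) * M), MonoidAlgebra.of ℂ G (g ^ r) := by
        intro M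
        induction M with
        | zero => simp
        | succ M ih =>
          rw [Finset.sum_range_succ, ih]
          have hsplit := Finset.sum_range_add (fun r => MonoidAlgebra.of ℂ G (g ^ r))
            ((k + 1) * M) (k + 1)
          have harg : (k + 1) * (M + 1) = (k + 1) * M + (k + 1) := by ring
          rw [harg, hsplit]
      exact hgeom m
    have hfull : ∑ r ∈ Finset.range ((k + 1) * m), MonoidAlgebra.of ℂ G (g ^ r)
        = (t : ℂ) • N + 1 := by
      rw [hmt, Finset.sum_range_succ, hcycle t, pow_mul, hgn, one_pow,
        map_one (MonoidAlgebra.of ℂ G), Nat.cast_smul_eq_nsmul ℂ t N]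
    -- invert 1 + t • N
    have hden : ((n : ℂ) * t + 1) ≠ 0 := by
      have : ((n * t + 1 : ℕ) : ℂ) ≠ 0 := by
        exact_mod_cast Nat.succ_ne_zero (n * t)
      push_cast at this
      convert this using 2
    set c : ℂ := (t : ℂ) with hc
    set u : MonoidAlgebra ℂ G := 1 + (-c / ((n : ℂ) * c + 1)) • N with hu
    have hinv : ((c • N + 1) * u) = 1 := by
      rw [hu]
      set d : ℂ := -c / ((n : ℂ) * c + 1) with hdd
      have expand : (c • N + 1) * (1 + d • N) = 1 + (c + d + c * d * n) • N := by
        have h1 : (c • N) * (d • N) = (c * d * (n : ℂ)) • N := by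
          rw [smul_mul_smul_comm, hNN, smul_smul]
        rw [add_mul, one_mul, mul_add, mul_one, h1]
        module
      rw [expand]
      have hd' : d * ((n : ℂ) * c + 1) = -c := by
        rw [hdd]
        exact div_mul_cancel₀ (-c) hden
      have : c + d + c * d * n = 0 := by
        calc c + d + c * d * n = c + d * ((n : ℂ) * c + 1) := by ring
          _ = c + -c := by rw [hd']
          _ = 0 := by ring
      rw [this, zero_smul, add_zero]
    refine IsUnit.of_mul_eq_one (η * u) ?_
    rw [← mul_assoc, hζη, hfull]
    exact hinv

end
end

section
/- Let m_1, ..., m_r be monomials in F⟨Y⟩ and let s ∈ ℤ_{≥0}. Then P_{r+s}(m_1,...,m_r, y_1,...,y_1), with s copies of y_1 appended, equals s! · Σ_{σ∈S_r} F_s(m_{σ(1)},...,m_{σ(r)}). -/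
noncomputable section

/-- The free non-unital associative algebra over `F` on countably many generators
`x_0, x_1, x_2, …`, realized as the semigroup algebra of the free semigroup on `ℕ`. -/
abbrev FreeNA (F : Type) [Field F] : Type := MonoidAlgebra F (FreeSemigroup ℕ)

/-- The monomial `x_{a_1} ⋯ x_{a_k}` attached to the list `[a_1, …, a_k]`
(and `0` for the empty list). -/
def xList (F : Type) [Field F] : List ℕ → FreeNA F
  | [] => 0
  | a :: t => MonoidAlgebra.single (FreeSemigroup.mk a t) 1

/-- `V_m`: the space of multilinear polynomials of degree `m`, spanned by the
monomials `x_{σ(0)} x_{σ(1)} ⋯ x_{σ(m-1)}` for `σ ∈ S_m`. -/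
def Vm (F : Type) [Field F] (m : ℕ) : Submodule F (FreeNA F) :=
  Submodule.span F
    (Set.range fun σ : Equiv.Perm (Fin m) =>
      xList F ((List.finRange m).map fun j => (σ j : ℕ)))

/-- A T-ideal: a two-sided ideal of `F⟨X⟩` closed under every algebra endomorphism
(an algebra endomorphism of the non-unital algebra `F⟨X⟩` being a multiplicative
`F`-linear map). -/
def IsTIdeal (F : Type) [Field F] (I : Submodule F (FreeNA F)) : Prop :=
  (∀ a b : FreeNA F, b ∈ I → a * b ∈ I ∧ b * a ∈ I) ∧
  (∀ ψ : FreeNA F →ₗ[F] FreeNA F, (∀ x y : FreeNA F, ψ (x * y) = ψ x * ψ y) →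
    ∀ a ∈ I, ψ a ∈ I)

/-- The smallest T-ideal containing `f`. -/
def TIdealGen (F : Type) [Field F] (f : FreeNA F) : Submodule F (FreeNA F) :=
  sInf {I | IsTIdeal F I ∧ f ∈ I}

/-- `W_{n,m} = V_m ∩ (x^n)^T`, where `x^n` is the `n`-th power of the variable `x_0`. -/
def Wnm (F : Type) [Field F] (n m : ℕ) : Submodule F (FreeNA F) :=
  Vm F m ⊓ TIdealGen F (xList F (List.replicate n 0))

/-- The symmetric polynomial `P_q(m_1, …, m_q) = ∑_{σ ∈ S_q} m_{σ(1)} ⋯ m_{σ(q)}`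
for a tuple of monomials given as lists of variable indices. -/
def Psym (F : Type) [Field F] {q : ℕ} (B : Fin q → List ℕ) : FreeNA F :=
  ∑ σ : Equiv.Perm (Fin q), xList F (((List.finRange q).map fun i => B (σ i)).flatten)

/-- The word `y_1^{a_0} m_1 y_1^{a_1} m_2 ⋯ m_r y_1^{a_r}` (the variable `y_1` being the
variable of index `0`). -/
def interWord {r : ℕ} (M : Fin r → List ℕ) (a : Fin (r + 1) → ℕ) : List ℕ :=
  ((List.finRange r).map fun i => List.replicate (a i.castSucc) 0 ++ M i).flatten
    ++ List.replicate (a (Fin.last r)) 0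

/-- `F_s(m_1, …, m_r) = ∑_{a_0+⋯+a_r = s} y_1^{a_0} m_1 y_1^{a_1} m_2 ⋯ m_r y_1^{a_r}`. -/
def Fs (F : Type) [Field F] {r : ℕ} (M : Fin r → List ℕ) (s : ℕ) : FreeNA F :=
  ∑ a ∈ Finset.Nat.antidiagonalTuple (r + 1) s, xList F (interWord M a)

open Equiv Finset

/-- word of a tuple of monomials -/
def wrd {n : ℕ} (B : Fin n → List ℕ) : List ℕ := ((List.finRange n).map B).flatten

lemma wrd_succ {n : ℕ} (B : Fin (n+1) → List ℕ) :
    wrd B = B 0 ++ wrd (fun i => B i.succ) := by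
  simp [wrd, List.finRange_succ, List.map_map, Function.comp_def]

lemma wrd_const {n : ℕ} : wrd (fun _ : Fin n => ([0] : List ℕ)) = List.replicate n 0 := by
  induction n with
  | zero => simp [wrd]
  | succ n ih => rw [wrd_succ, ih]; simp [List.replicate_succ]

lemma sum_perm_split {β : Type*} [AddCommMonoid β] (n : ℕ)
    (f : Fin (n+1) → (Fin n → Fin (n+1)) → β) :
    ∑ τ : Equiv.Perm (Fin (n+1)), f (τ 0) (fun i => τ i.succ)
      = ∑ p : Fin (n+1), ∑ σ : Equiv.Perm (Fin n), f p (fun i => p.succAbove (σ i)) := by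
  rw [← Equiv.sum_comp (Equiv.Perm.decomposeFin.symm)
    (fun τ : Equiv.Perm (Fin (n+1)) => f (τ 0) (fun i => τ i.succ)), Fintype.sum_prod_type]
  refine Finset.sum_congr rfl fun p _ => ?_
  have hswap : ∀ j : Fin n, Equiv.swap 0 p j.succ ≠ p := by
    intro j h
    have h0 : Equiv.swap 0 p (0 : Fin (n+1)) = p := Equiv.swap_apply_left 0 p
    exact Fin.succ_ne_zero j ((Equiv.swap 0 p).injective (h.trans h0.symm))
  set E : Option (Fin n) ≃ Option (Fin n) :=
    (finSuccEquiv n).symm.trans ((Equiv.swap 0 p).trans (finSuccEquiv' p)) with hE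
  have hEsome : ∀ j : Fin n, ∃ k, E (some j) = some k := by
    intro j
    obtain ⟨k, hk⟩ := Fin.exists_succAbove_eq (hswap j)
    exact ⟨k, by simp [hE, finSuccEquiv_symm_some, ← hk, finSuccEquiv'_succAbove]⟩
  have hc : ∀ j : Fin n, p.succAbove (Equiv.removeNone E j) = Equiv.swap 0 p j.succ := by
    intro j
    obtain ⟨k, hk⟩ := Fin.exists_succAbove_eq (hswap j)
    have h1 : E (some j) = some k := by
      simp [hE, finSuccEquiv_symm_some, ← hk, finSuccEquiv'_succAbove]
    have h2 : some (Equiv.removeNone E j) = E (some j) := Equiv.removeNone_some E ⟨k, h1⟩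
    rw [h1] at h2
    rw [← hk]
    exact congrArg p.succAbove (Option.some_injective _ h2)
  rw [← Equiv.sum_comp (Equiv.mulLeft (Equiv.removeNone E))
    (fun σ : Equiv.Perm (Fin n) => f p (fun i => p.succAbove (σ i)))]
  refine Finset.sum_congr rfl fun σ _ => ?_
  simp only [Equiv.Perm.decomposeFin_symm_apply_zero, Equiv.Perm.decomposeFin_symm_apply_succ]
  congr 1
  funext i
  rw [← hc (σ i)]
  rfl

lemma interWord_nil (N : Fin 0 → List ℕ) (a : Fin 1 → ℕ) :
    interWord N a = List.replicate (a 0) 0 := by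
  simp [interWord]

lemma interWord_succ {r : ℕ} (N : Fin (r+1) → List ℕ) (a : Fin (r+2) → ℕ) :
    interWord N a
      = List.replicate (a 0) 0 ++ (N 0 ++ interWord (fun i => N i.succ) (fun i => a i.succ)) := by
  simp only [interWord, List.finRange_succ, List.map_cons, List.map_map, List.flatten_cons,
    Function.comp]
  rw [List.append_assoc, List.append_assoc]
  congr 2

lemma interWord_cons_zero {r : ℕ} (N : Fin (r+1) → List ℕ) (b : Fin (r+1) → ℕ) :
    interWord N (Fin.cons 0 b) = N 0 ++ interWord (fun i => N i.succ) b := by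
  rw [interWord_succ]
  simp [Fin.cons_succ]

lemma interWord_update {r : ℕ} (N : Fin (r+1) → List ℕ) (a : Fin (r+2) → ℕ) :
    interWord N (Function.update a 0 (a 0 + 1)) = 0 :: interWord N a := by
  rw [interWord_succ, interWord_succ]
  have h1 : Function.update a 0 (a 0 + 1) 0 = a 0 + 1 := Function.update_self _ _ _
  have h2 : ∀ i : Fin (r+1), Function.update a 0 (a 0 + 1) i.succ = a i.succ := fun i =>
    Function.update_of_ne (Fin.succ_ne_zero i) _ _
  simp [h1, h2, List.replicate_succ]

lemma interWord_zero_right {r : ℕ} (N : Fin r → List ℕ) :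
    interWord N 0 = wrd N := by
  simp [interWord, wrd]

lemma sum_AT_succ {β : Type*} [AddCommMonoid β] (k s : ℕ) (f : (Fin (k+1+1) → ℕ) → β) :
    ∑ a ∈ Finset.Nat.antidiagonalTuple (k+1+1) (s+1), f a
      = (∑ b ∈ Finset.Nat.antidiagonalTuple (k+1) (s+1), f (Fin.cons 0 b))
        + ∑ a ∈ Finset.Nat.antidiagonalTuple (k+1+1) s, f (Function.update a 0 (a 0 + 1)) := by
  classical
  rw [← Finset.sum_filter_add_sum_filter_not (Finset.Nat.antidiagonalTuple (k+1+1) (s+1))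
    (fun a => a 0 = 0)]
  congr 1
  · refine Finset.sum_bij' (fun a _ => Fin.tail a) (fun b _ => Fin.cons 0 b) ?_ ?_ ?_ ?_ ?_
    · intro a ha
      rw [Finset.mem_filter, Finset.Nat.mem_antidiagonalTuple] at ha
      rw [Finset.Nat.mem_antidiagonalTuple]
      obtain ⟨h1, h2⟩ := ha
      rw [Fin.sum_univ_succ, h2, zero_add] at h1
      exact h1
    · intro b hb
      rw [Finset.Nat.mem_antidiagonalTuple] at hb
      rw [Finset.mem_filter, Finset.Nat.mem_antidiagonalTuple]
      refine ⟨?_, Fin.cons_zero _ _⟩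
      rw [Fin.sum_univ_succ]
      simp [hb]
    · intro a ha
      rw [Finset.mem_filter] at ha
      conv_lhs => rw [← ha.2]
      exact Fin.cons_self_tail a
    · intro b _
      exact Fin.tail_cons _ _
    · intro a ha
      rw [Finset.mem_filter] at ha
      conv_rhs => rw [← ha.2, Fin.cons_self_tail a]
  · refine Finset.sum_bij' (fun a _ => Function.update a 0 (a 0 - 1))
      (fun a _ => Function.update a 0 (a 0 + 1)) ?_ ?_ ?_ ?_ ?_
    · intro a ha
      rw [Finset.mem_filter, Finset.Nat.mem_antidiagonalTuple] at ha
      rw [Finset.Nat.mem_antidiagonalTuple]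
      obtain ⟨h1, h2⟩ := ha
      rw [Fin.sum_univ_succ] at h1 ⊢
      have e0 : Function.update a 0 (a 0 - 1) 0 = a 0 - 1 := Function.update_self _ _ _
      have es : ∀ i : Fin (k+1), Function.update a 0 (a 0 - 1) i.succ = a i.succ := fun i =>
        Function.update_of_ne (Fin.succ_ne_zero i) _ _
      rw [e0, Finset.sum_congr rfl fun i _ => es i]
      omega
    · intro a ha
      rw [Finset.Nat.mem_antidiagonalTuple] at ha
      rw [Finset.mem_filter, Finset.Nat.mem_antidiagonalTuple]
      have e0 : Function.update a 0 (a 0 + 1) 0 = a 0 + 1 := Function.update_self _ _ _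
      have es : ∀ i : Fin (k+1), Function.update a 0 (a 0 + 1) i.succ = a i.succ := fun i =>
        Function.update_of_ne (Fin.succ_ne_zero i) _ _
      rw [Fin.sum_univ_succ] at ha
      constructor
      · rw [Fin.sum_univ_succ, e0, Finset.sum_congr rfl fun i _ => es i]
        omega
      · rw [e0]; omega
    · intro a ha
      rw [Finset.mem_filter] at ha
      funext i
      rcases eq_or_ne i 0 with rfl | hi
      · rw [Function.update_self, Function.update_self]
        omega
      · rw [Function.update_of_ne hi, Function.update_of_ne hi]
    · intro a _
      funext i
      rcases eq_or_ne i 0 with rfl | hi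
      · rw [Function.update_self, Function.update_self]
        omega
      · rw [Function.update_of_ne hi, Function.update_of_ne hi]
    · intro a ha
      rw [Finset.mem_filter] at ha
      congr 1
      funext i
      rcases eq_or_ne i 0 with rfl | hi
      · rw [Function.update_self, Function.update_self]
        omega
      · rw [Function.update_of_ne hi, Function.update_of_ne hi]

lemma sum_fin_filter_lt {β : Type*} [AddCommMonoid β] {q r : ℕ} (h : r ≤ q) (f : Fin q → β) :
    ∑ p ∈ Finset.univ.filter (fun p : Fin q => (p : ℕ) < r), f p
      = ∑ k : Fin r, f ⟨(k : ℕ), lt_of_lt_of_le k.isLt h⟩ := by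
  refine Finset.sum_bij' (fun (p : Fin q) hp => (⟨(p : ℕ), by simpa using hp⟩ : Fin r))
    (fun (k : Fin r) _ => (⟨(k : ℕ), lt_of_lt_of_le k.isLt h⟩ : Fin q)) ?_ ?_ ?_ ?_ ?_
  · intro a ha; exact Finset.mem_univ _
  · intro k _
    simp [Finset.mem_filter, k.isLt]
  · intro a _; exact Fin.ext rfl
  · intro k _; exact Fin.ext rfl
  · intro a _; exact congrArg f (Fin.ext rfl)

lemma sum_fin_filter_ge {β : Type*} [AddCommMonoid β] {q r s : ℕ} (h : r + s = q)
    (f : Fin q → β) :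
    ∑ p ∈ Finset.univ.filter (fun p : Fin q => ¬ (p : ℕ) < r), f p
      = ∑ i : Fin s, f ⟨r + (i : ℕ), by omega⟩ := by
  refine Finset.sum_bij' (fun (p : Fin q) hp => (⟨(p : ℕ) - r, by
      simp only [Finset.mem_filter] at hp
      have := p.isLt; omega⟩ : Fin s))
    (fun (i : Fin s) _ => (⟨r + (i : ℕ), by have := i.isLt; omega⟩ : Fin q)) ?_ ?_ ?_ ?_ ?_
  · intro a ha; exact Finset.mem_univ _
  · intro i _
    simp [Finset.mem_filter]
  · intro a ha
    simp only [Finset.mem_filter] at ha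
    exact Fin.ext (by simp; omega)
  · intro i _
    exact Fin.ext (by simp)
  · intro a ha
    simp only [Finset.mem_filter] at ha
    exact congrArg f (Fin.ext (by simp; omega))

lemma val_succAbove' {m : ℕ} (p : Fin (m+1)) (j : Fin m) :
    ((p.succAbove j) : ℕ) = if (j : ℕ) < (p : ℕ) then (j : ℕ) else (j : ℕ) + 1 := by
  rcases lt_or_ge ((j : ℕ)) ((p : ℕ)) with h | h
  · rw [Fin.succAbove_of_castSucc_lt _ _ (by simpa [Fin.lt_def] using h), if_pos h]
    rfl
  · rw [Fin.succAbove_of_le_castSucc _ _ (by simpa [Fin.le_def] using h), if_neg (not_lt.2 h)]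
    rfl

lemma key (F : Type) [Field F] (q : ℕ) :
    ∀ (r s : ℕ), r + s = q → ∀ (M : Fin r → List ℕ) (B : Fin q → List ℕ),
      (∀ j : Fin q, B j = if h : (j : ℕ) < r then M ⟨(j : ℕ), h⟩ else [0]) →
      ∀ pre : List ℕ,
      (∑ τ : Equiv.Perm (Fin q), xList F (pre ++ wrd (fun i => B (τ i))))
        = s.factorial • ∑ σ : Equiv.Perm (Fin r),
            ∑ a ∈ Finset.Nat.antidiagonalTuple (r + 1) s,
              xList F (pre ++ interWord (fun i => M (σ i)) a) := by
  induction q with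
  | zero =>
    intro r s hq M B hB pre
    obtain rfl : r = 0 := by omega
    obtain rfl : s = 0 := by omega
    rw [Finset.Nat.antidiagonalTuple_zero_right]
    have h1 : ∀ τ : Equiv.Perm (Fin 0), xList F (pre ++ wrd (fun i => B (τ i)))
        = xList F pre := by
      intro τ; simp [wrd]
    have h2 : ∀ σ : Equiv.Perm (Fin 0),
        (∑ a ∈ ({0} : Finset (Fin (0+1) → ℕ)), xList F (pre ++ interWord (fun i => M (σ i)) a))
          = xList F pre := by
      intro σ
      rw [Finset.sum_singleton, interWord_nil]
      simp
    rw [Finset.sum_congr rfl fun τ _ => h1 τ, Finset.sum_congr rfl fun σ _ => h2 σ]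
    simp
  | succ q0 ih =>
    intro r s hq M B hB pre
    cases r with
    | zero =>
      obtain rfl : s = q0 + 1 := by omega
      have hB' : ∀ j : Fin (q0+1), B j = [0] := by
        intro j; rw [hB]; exact dif_neg (Nat.not_lt_zero _)
      have hw : ∀ τ : Equiv.Perm (Fin (q0+1)),
          xList F (pre ++ wrd (fun i => B (τ i)))
            = xList F (pre ++ List.replicate (q0+1) 0) := by
        intro τ
        have hfun : (fun i => B (τ i)) = fun _ : Fin (q0+1) => ([0] : List ℕ) :=
          funext fun i => hB' _
        rw [hfun, wrd_const]
      rw [Finset.sum_congr rfl fun τ _ => hw τ]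
      rw [Finset.sum_const, Finset.card_univ, Fintype.card_perm, Fintype.card_fin]
      have h2 : ∀ σ : Equiv.Perm (Fin 0),
          (∑ a ∈ Finset.Nat.antidiagonalTuple (0+1) (q0+1),
            xList F (pre ++ interWord (fun i => M (σ i)) a))
            = xList F (pre ++ List.replicate (q0+1) 0) := by
        intro σ
        have hAT : Finset.Nat.antidiagonalTuple (0+1) (q0+1)
            = ({![q0+1]} : Finset (Fin (0+1) → ℕ)) := Finset.Nat.antidiagonalTuple_one _
        rw [hAT, Finset.sum_singleton, interWord_nil]
        simp
      rw [Finset.sum_congr rfl fun σ _ => h2 σ]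
      rw [Finset.sum_const, Finset.card_univ, Fintype.card_perm, Fintype.card_fin]
      simp [Nat.factorial]
    | succ r' =>
      cases s with
      | zero =>
        obtain rfl : r' = q0 := by omega
        rw [Nat.factorial_zero, one_smul]
        refine Finset.sum_congr rfl fun σ _ => ?_
        rw [Finset.Nat.antidiagonalTuple_zero_right, Finset.sum_singleton, interWord_zero_right]
        have hfun : (fun i => B (σ i)) = (fun i => M (σ i)) := by
          funext i
          rw [hB]
          exact (dif_pos (σ i).isLt).trans (congrArg M (Fin.ext rfl))
        rw [hfun]
      | succ s' =>
        have hrq : r' + 1 ≤ q0 + 1 := by omega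
        -- LHS: split off the first letter
        have G1 : (∑ τ : Equiv.Perm (Fin (q0+1)), xList F (pre ++ wrd (fun i => B (τ i))))
            = ∑ p : Fin (q0+1), ∑ σ : Equiv.Perm (Fin q0),
                xList F ((pre ++ B p) ++ wrd (fun i => B (p.succAbove (σ i)))) := by
          rw [← sum_perm_split q0
            (fun v rest => xList F ((pre ++ B v) ++ wrd (fun i => B (rest i))))]
          refine Finset.sum_congr rfl fun τ _ => ?_
          rw [wrd_succ (fun i => B (τ i)), ← List.append_assoc]
        rw [G1]
        rw [← Finset.sum_filter_add_sum_filter_not Finset.univ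
          (fun p : Fin (q0+1) => (p : ℕ) < r' + 1)]
        rw [sum_fin_filter_lt hrq, sum_fin_filter_ge hq]
        -- Term 1: positions of monomials
        have hT1 : ∀ (p : Fin (q0+1)) (k : Fin (r'+1)), (p : ℕ) = (k : ℕ) →
            (∑ σ : Equiv.Perm (Fin q0),
              xList F (pre ++ B p ++ wrd fun i => B (p.succAbove (σ i))))
            = (s' + 1).factorial • ∑ σ' : Equiv.Perm (Fin r'),
                ∑ a ∈ Finset.Nat.antidiagonalTuple (r' + 1) (s' + 1),
                  xList F (pre ++ M k ++ interWord (fun i => M (k.succAbove (σ' i))) a) := by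
          intro p k hpv
          have hkr : (k : ℕ) < r' + 1 := k.isLt
          have hBp : B p = M k := by
            rw [hB, dif_pos (show (p : ℕ) < r' + 1 from by omega)]
            exact congrArg M (Fin.ext hpv)
          have hB1 : ∀ j : Fin q0, B (p.succAbove j)
              = if h : (j : ℕ) < r' then (fun t : Fin r' => M (k.succAbove t)) ⟨(j : ℕ), h⟩
                else [0] := by
            intro j
            have h1 : ((p.succAbove j : Fin (q0+1)) : ℕ)
                = if (j : ℕ) < (p : ℕ) then (j : ℕ) else (j : ℕ) + 1 := val_succAbove' p j
            rw [hB]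
            rcases lt_or_ge ((j : ℕ)) ((k : ℕ)) with hjk | hjk
            · have hval : ((p.succAbove j : Fin (q0+1)) : ℕ) = (j : ℕ) := by
                rw [h1, if_pos (by omega)]
              have hj' : (j : ℕ) < r' := by omega
              rw [dif_pos (show ((p.succAbove j : Fin (q0+1)) : ℕ) < r' + 1 from by omega),
                dif_pos hj']
              dsimp only
              have h2 : ((k.succAbove ⟨(j : ℕ), hj'⟩ : Fin (r' + 1)) : ℕ)
                  = if (j : ℕ) < (k : ℕ) then (j : ℕ) else (j : ℕ) + 1 :=
                val_succAbove' k ⟨(j : ℕ), hj'⟩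
              have h2' : ((k.succAbove ⟨(j : ℕ), hj'⟩ : Fin (r' + 1)) : ℕ) = (j : ℕ) := by
                rw [h2, if_pos hjk]
              exact congrArg M (Fin.ext (hval.trans h2'.symm))
            · have hval : ((p.succAbove j : Fin (q0+1)) : ℕ) = (j : ℕ) + 1 := by
                rw [h1, if_neg (by omega)]
              by_cases hj' : (j : ℕ) < r'
              · rw [dif_pos (show ((p.succAbove j : Fin (q0+1)) : ℕ) < r' + 1 from by omega),
                  dif_pos hj']
                dsimp only
                have h2 : ((k.succAbove ⟨(j : ℕ), hj'⟩ : Fin (r' + 1)) : ℕ)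
                    = if (j : ℕ) < (k : ℕ) then (j : ℕ) else (j : ℕ) + 1 :=
                  val_succAbove' k ⟨(j : ℕ), hj'⟩
                have h2' : ((k.succAbove ⟨(j : ℕ), hj'⟩ : Fin (r' + 1)) : ℕ) = (j : ℕ) + 1 := by
                  rw [h2, if_neg (not_lt.2 hjk)]
                exact congrArg M (Fin.ext (hval.trans h2'.symm))
              · rw [dif_neg (show ¬ ((p.succAbove j : Fin (q0+1)) : ℕ) < r' + 1 from by omega),
                  dif_neg hj']
          rw [hBp]
          exact ih r' (s' + 1) (by omega) (fun t => M (k.succAbove t))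
            (fun j => B (p.succAbove j)) hB1 (pre ++ M k)
        -- Term 2: positions of y's
        have hT2 : ∀ p : Fin (q0+1), r' + 1 ≤ (p : ℕ) →
            (∑ σ : Equiv.Perm (Fin q0),
              xList F (pre ++ B p ++ wrd fun t => B (p.succAbove (σ t))))
            = s'.factorial • ∑ σ : Equiv.Perm (Fin (r' + 1)),
                ∑ a ∈ Finset.Nat.antidiagonalTuple (r' + 1 + 1) s',
                  xList F (pre ++ [0] ++ interWord (fun t => M (σ t)) a) := by
          intro p hpv
          have hBp : B p = [0] := by
            rw [hB]
            exact dif_neg (by omega)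
          have hB2 : ∀ j : Fin q0, B (p.succAbove j)
              = if h : (j : ℕ) < r' + 1 then M ⟨(j : ℕ), h⟩ else [0] := by
            intro j
            have h1 : ((p.succAbove j : Fin (q0+1)) : ℕ)
                = if (j : ℕ) < (p : ℕ) then (j : ℕ) else (j : ℕ) + 1 := val_succAbove' p j
            rw [hB]
            by_cases hj : (j : ℕ) < r' + 1
            · have hval : ((p.succAbove j : Fin (q0+1)) : ℕ) = (j : ℕ) := by
                rw [h1, if_pos (by omega)]
              rw [dif_pos (show ((p.succAbove j : Fin (q0+1)) : ℕ) < r' + 1 from by omega),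
                dif_pos hj]
              exact congrArg M (Fin.ext hval)
            · have hor : ((p.succAbove j : Fin (q0+1)) : ℕ) = (j : ℕ)
                  ∨ ((p.succAbove j : Fin (q0+1)) : ℕ) = (j : ℕ) + 1 := by
                rw [h1]
                split
                · exact Or.inl rfl
                · exact Or.inr rfl
              rw [dif_neg (show ¬ ((p.succAbove j : Fin (q0+1)) : ℕ) < r' + 1 from by
                  rcases hor with h | h <;> omega),
                dif_neg hj]
          rw [hBp]
          exact ih (r' + 1) s' (by omega) M (fun j => B (p.succAbove j)) hB2 (pre ++ [0])
        rw [Finset.sum_congr rfl fun (k : Fin (r'+1)) _ =>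
            hT1 ⟨(k : ℕ), lt_of_lt_of_le k.isLt hrq⟩ k rfl,
          Finset.sum_congr rfl fun (i : Fin (s'+1)) _ =>
            hT2 ⟨r' + 1 + (i : ℕ), by have := i.isLt; omega⟩ (Nat.le_add_right _ _)]
        rw [Finset.sum_const, Finset.card_univ, Fintype.card_fin]
        -- RHS transformation
        have R1 : ∀ σ : Equiv.Perm (Fin (r' + 1)),
            (∑ a ∈ Finset.Nat.antidiagonalTuple (r' + 1 + 1) (s' + 1),
              xList F (pre ++ interWord (fun i => M (σ i)) a))
            = (∑ b ∈ Finset.Nat.antidiagonalTuple (r' + 1) (s' + 1),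
                xList F (pre ++ M (σ 0) ++ interWord (fun i => M (σ i.succ)) b))
              + ∑ a ∈ Finset.Nat.antidiagonalTuple (r' + 1 + 1) s',
                  xList F (pre ++ [0] ++ interWord (fun i => M (σ i)) a) := by
          intro σ
          rw [sum_AT_succ r' s' (fun a => xList F (pre ++ interWord (fun i => M (σ i)) a))]
          congr 1
          · refine Finset.sum_congr rfl fun b _ => ?_
            rw [interWord_cons_zero, ← List.append_assoc]
          · refine Finset.sum_congr rfl fun a _ => ?_
            rw [interWord_update]
            rw [show pre ++ (0 :: interWord (fun i => M (σ i)) a)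
              = pre ++ [0] ++ interWord (fun i => M (σ i)) a from by simp]
        have RHSeq : (s' + 1).factorial • ∑ σ : Equiv.Perm (Fin (r' + 1)),
              ∑ a ∈ Finset.Nat.antidiagonalTuple (r' + 1 + 1) (s' + 1),
                xList F (pre ++ interWord (fun i => M (σ i)) a)
            = (∑ k : Fin (r' + 1), (s' + 1).factorial • ∑ σ' : Equiv.Perm (Fin r'),
                ∑ a ∈ Finset.Nat.antidiagonalTuple (r' + 1) (s' + 1),
                  xList F (pre ++ M k ++ interWord (fun i => M (k.succAbove (σ' i))) a))
              + (s' + 1).factorial • ∑ σ : Equiv.Perm (Fin (r' + 1)),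
                  ∑ a ∈ Finset.Nat.antidiagonalTuple (r' + 1 + 1) s',
                    xList F (pre ++ [0] ++ interWord (fun i => M (σ i)) a) := by
          rw [Finset.sum_congr rfl fun σ _ => R1 σ, Finset.sum_add_distrib, smul_add]
          congr 1
          rw [sum_perm_split r' (fun v rest =>
            ∑ b ∈ Finset.Nat.antidiagonalTuple (r' + 1) (s' + 1),
              xList F (pre ++ M v ++ interWord (fun i => M (rest i)) b))]
          rw [Finset.smul_sum]
        rw [RHSeq]
        congr 1
        rw [smul_smul, Nat.factorial_succ]

/-- `P_{r+s}(m_1, …, m_r, y_1, …, y_1) = s! ∑_{σ ∈ S_r} F_s(m_{σ(1)}, …, m_{σ(r)})`. -/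
theorem Psym_append_y1 (F : Type) [Field F] [CharZero F] (r s : ℕ)
    (M : Fin r → List ℕ) (hM : ∀ i, M i ≠ []) :
    Psym F (fun j : Fin (r + s) => if h : (j : ℕ) < r then M ⟨j, h⟩ else [0]) =
      Nat.factorial s • ∑ σ : Equiv.Perm (Fin r), Fs F (fun i => M (σ i)) s := by
  have h := key F (r + s) r s rfl M
    (fun j : Fin (r + s) => if h : (j : ℕ) < r then M ⟨j, h⟩ else [0]) (fun j => rfl) []
  simpa [Psym, Fs, wrd] using h

end
end

section
/- Fix q, r ∈ ℕ and monomials m_1, ..., m_r ∈ F⟨Y⟩ with |m_i| ≤ q for each i, and fix n ∈ ℤ_{≥0}. For any monomial u ∈ F⟨Y⟩ whose central part satisfies |C(u)| > qr, there exists a polynomial p such that for every s ∈ ℤ_{≥0}, the coefficient of u^{(s)} in F_{s+n}(m_1,...,m_r) equals p(s). -/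
noncomputable section

/-- The coefficient of the monomial with variable indices `l` in the polynomial `P`. -/
def coeffList (F : Type) [Field F] (P : FreeNA F) : List ℕ → F
  | [] => 0
  | a :: t => P.coeff (FreeSemigroup.mk a t)

namespace CentralCount

/-- number of ways to decompose `w` as `0^{a_0} M_0 0^{a_1} M_1 ⋯`. -/
def cnt : (r : ℕ) → (Fin r → List ℕ) → List ℕ → ℕ
  | 0, _, w => if ∀ x ∈ w, x = 0 then 1 else 0
  | r+1, M, w => ∑ a0 ∈ Finset.range (w.length + 1),
      if (List.replicate a0 0 ++ M 0) <+: w then cnt r (Fin.tail M) (w.drop (a0 + (M 0).length)) else 0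

lemma interWord_zeroR (M : Fin 0 → List ℕ) (a : Fin 1 → ℕ) :
    interWord M a = List.replicate (a 0) 0 := by
  simp [interWord]

lemma interWord_succ {r : ℕ} (M : Fin (r+1) → List ℕ) (a : Fin (r+2) → ℕ) :
    interWord M a =
      List.replicate (a 0) 0 ++ (M 0 ++ interWord (Fin.tail M) (Fin.tail a)) := by
  unfold interWord
  rw [List.finRange_succ]
  simp only [List.map_cons, List.flatten_cons, List.map_map, Fin.castSucc_zero,
    List.append_assoc]
  have h1 : List.map ((fun i => List.replicate (a i.castSucc) 0 ++ M i) ∘ Fin.succ) (List.finRange r)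
      = List.map (fun i => List.replicate (Fin.tail a i.castSucc) 0 ++ Fin.tail M i) (List.finRange r) := by
    apply List.map_congr_left
    intro i _
    simp [Function.comp, Fin.tail]
  have h2 : a (Fin.last (r+1)) = Fin.tail a (Fin.last r) := by
    simp [Fin.tail, Fin.succ_last]
  rw [h1, h2]

lemma length_interWord : ∀ {r : ℕ} (M : Fin r → List ℕ) (a : Fin (r+1) → ℕ),
    (interWord M a).length = (∑ i, a i) + ∑ i, (M i).length := by
  intro r
  induction r with
  | zero =>
    intro M a
    simp [interWord_zeroR]
  | succ r ih =>
    intro M a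
    rw [interWord_succ]
    simp only [List.length_append, List.length_replicate, ih]
    rw [Fin.sum_univ_succ (f := a), Fin.sum_univ_succ (f := fun i => (M i).length)]
    simp [Fin.tail]
    ring

lemma comp_le {r : ℕ} {M : Fin r → List ℕ} {a : Fin (r+1) → ℕ} {w : List ℕ}
    (hw : interWord M a = w) (i : Fin (r+1)) : a i ≤ w.length := by
  have := length_interWord M a
  rw [hw] at this
  have h2 : a i ≤ ∑ j, a j := Finset.single_le_sum (fun j _ => Nat.zero_le _) (Finset.mem_univ i)
  omega

abbrev Z (t : ℕ) : List ℕ := List.replicate t 0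

lemma pref_shift {a t : ℕ} {u h : List ℕ} :
    (Z a ++ u <+: Z t ++ h) ↔ (Z (a+1) ++ u <+: Z (t+1) ++ h) := by
  constructor
  · rintro ⟨tl, htl⟩
    exact ⟨tl, by simp only [List.replicate_succ, List.cons_append, List.append_assoc] at htl ⊢; rw [htl]⟩
  · rintro ⟨tl, htl⟩
    simp only [List.replicate_succ, List.cons_append, List.append_assoc, List.cons.injEq] at htl
    exact ⟨tl, by rw [List.append_assoc]; exact htl.2⟩

lemma pref_shift_add {a t : ℕ} {u h : List ℕ} (d : ℕ) :
    (Z a ++ u <+: Z t ++ h) ↔ (Z (a+d) ++ u <+: Z (t+d) ++ h) := by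
  induction d with
  | zero => rfl
  | succ d ih => rw [ih, ← Nat.add_assoc, ← Nat.add_assoc]; exact pref_shift

lemma pref_left {u x y : List ℕ} (hl : u.length ≤ x.length) : u <+: x ++ y ↔ u <+: x := by
  rw [List.prefix_iff_eq_take, List.prefix_iff_eq_take, List.take_append_of_le_length hl]

lemma pref_pad_up {u x : List ℕ} {N : ℕ} (h : u <+: x ++ Z N) : u <+: x ++ Z (N+1) := by
  refine h.trans ⟨[0], ?_⟩
  rw [List.append_assoc, ← List.replicate_succ' (n := N)]

lemma pref_pad_down {u x : List ℕ} {N : ℕ} (hl : u.length ≤ x.length + N)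
    (h : u <+: x ++ Z (N+1)) : u <+: x ++ Z N := by
  rw [List.prefix_iff_eq_take] at h ⊢
  calc u = List.take u.length (x ++ Z (N+1)) := h
    _ = List.take u.length ((x ++ Z N) ++ [0]) := by
          have hz : (Z (N+1) : List ℕ) = Z N ++ [0] := List.replicate_succ'
          rw [hz, ← List.append_assoc]
    _ = List.take u.length (x ++ Z N) := List.take_append_of_le_length (by simp [hl])

lemma pref_pad_le {u x : List ℕ} {N N' : ℕ} (hNN : N ≤ N') (hl : u.length ≤ x.length + N) :
    (u <+: x ++ Z N ↔ u <+: x ++ Z N') := by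
  obtain ⟨d, rfl⟩ := Nat.exists_eq_add_of_le hNN
  induction d with
  | zero => rfl
  | succ d ih =>
    rw [ih (by omega), ← Nat.add_assoc]
    constructor
    · exact pref_pad_up
    · exact pref_pad_down (by omega)

lemma pref_pad_iff {u x : List ℕ} {N N' : ℕ} (hl : u.length ≤ x.length + N)
    (hl' : u.length ≤ x.length + N') :
    (u <+: x ++ Z N ↔ u <+: x ++ Z N') := by
  rcases le_total N N' with hle | hle
  · exact pref_pad_le hle hl
  · exact (pref_pad_le hle hl').symm

lemma drop_rep (t k : ℕ) (h : List ℕ) : (Z t ++ h).drop (t + k) = h.drop k := by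
  have := List.drop_length_add_append (l₁ := Z t) (l₂ := h) k
  rwa [List.length_replicate] at this

lemma drop_rep_le {n t : ℕ} (h : List ℕ) (hn : n ≤ t) :
    (Z t ++ h).drop n = Z (t - n) ++ h := by
  rw [List.drop_append_of_le_length (by simpa using hn), List.drop_replicate]

lemma pref_rep {u : List ℕ} {t : ℕ} (h : u <+: Z t) : u = Z u.length := by
  have hl := h.length_le
  rw [List.length_replicate] at hl
  rw [List.prefix_iff_eq_take.mp h, List.take_replicate]
  simp

lemma rep_pref {k t : ℕ} (hk : k ≤ t) : Z k <+: Z t := by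
  refine ⟨Z (t - k), ?_⟩
  rw [← List.replicate_add]
  congr 1
  omega

lemma card_eq_cnt : ∀ (r : ℕ) (M : Fin r → List ℕ) (w : List ℕ),
    ((Fintype.piFinset (fun _ : Fin (r+1) => Finset.range (w.length+1))).filter
      (fun a => interWord M a = w)).card = cnt r M w := by
  intro r
  induction r with
  | zero =>
    intro M w
    rw [cnt]
    by_cases hw : ∀ x ∈ w, x = 0
    · rw [if_pos hw]
      rw [Finset.card_eq_one]
      refine ⟨fun _ => w.length, ?_⟩
      have hwz : w = Z w.length := List.eq_replicate_iff.mpr ⟨rfl, hw⟩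
      ext a
      simp only [Finset.mem_filter, Fintype.mem_piFinset, Finset.mem_range,
        Finset.mem_singleton, interWord_zeroR]
      constructor
      · rintro ⟨-, heq⟩
        have hlen : a 0 = w.length := by
          have := congrArg List.length heq
          simpa using this
        funext i
        have : i = 0 := by fin_cases i <;> rfl
        rw [this, hlen]
      · rintro rfl
        exact ⟨fun _ => Nat.lt_succ_self _, hwz.symm⟩
    · rw [if_neg hw]
      rw [Finset.card_eq_zero, Finset.filter_eq_empty_iff]
      rintro a -
      rw [interWord_zeroR]
      intro heq
      exact hw (fun x hx => by
        rw [← heq] at hx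
        exact (List.eq_of_mem_replicate hx))
  | succ r ih =>
    intro M w
    classical
    set m := (M 0).length with hm
    set D : ℕ → Finset (Fin (r+1) → ℕ) := fun a0 =>
      if (List.replicate a0 0 ++ M 0) <+: w then
        (Fintype.piFinset (fun _ : Fin (r+1) => Finset.range ((w.drop (a0 + m)).length+1))).filter
          (fun a => interWord (Fin.tail M) a = w.drop (a0 + m))
      else ∅ with hD
    have h1 : cnt (r+1) M w = ∑ a0 ∈ Finset.range (w.length+1), (D a0).card := by
      rw [cnt]
      refine Finset.sum_congr rfl (fun a0 _ => ?_)
      by_cases hpre : (List.replicate a0 0 ++ M 0) <+: w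
      · rw [if_pos hpre, hD]
        simp only [if_pos hpre]
        exact (ih (Fin.tail M) (w.drop (a0 + m))).symm
      · rw [if_neg hpre, hD]
        simp [if_neg hpre]
    rw [h1, ← Finset.card_sigma]
    refine Finset.card_bij' (fun a _ => ⟨a 0, Fin.tail a⟩) (fun b _ => Fin.cons b.1 b.2)
      ?_ ?_ ?_ ?_
    · -- forward membership
      intro a ha
      rw [Finset.mem_filter, Fintype.mem_piFinset] at ha
      obtain ⟨hpi, hiw⟩ := ha
      have hsp := interWord_succ M a
      rw [hiw] at hsp
      have hpre : (List.replicate (a 0) 0 ++ M 0) <+: w :=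
        ⟨interWord (Fin.tail M) (Fin.tail a), by rw [hsp, List.append_assoc]⟩
      have hdrop : w.drop (a 0 + m) = interWord (Fin.tail M) (Fin.tail a) := by
        rw [hsp]
        have hlen : (List.replicate (a 0) 0 ++ M 0).length = a 0 + m := by simp [hm]
        rw [← List.append_assoc, ← hlen, List.drop_left]
      rw [Finset.mem_sigma]
      constructor
      · exact hpi 0
      · rw [hD]
        simp only [if_pos hpre, Finset.mem_filter, Fintype.mem_piFinset]
        refine ⟨fun i => ?_, hdrop.symm⟩
        rw [Finset.mem_range, Nat.lt_succ_iff]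
        exact comp_le hdrop.symm i
    · -- backward membership
      rintro ⟨a0, a'⟩ hb
      rw [Finset.mem_sigma] at hb
      obtain ⟨hb1, hb2⟩ := hb
      have hpre : (List.replicate a0 0 ++ M 0) <+: w := by
        by_contra hh
        rw [hD] at hb2
        simp only [if_neg hh] at hb2
        exact absurd hb2 (Finset.notMem_empty _)
      rw [hD] at hb2
      simp only [if_pos hpre, Finset.mem_filter, Fintype.mem_piFinset] at hb2
      obtain ⟨hpi', hiw'⟩ := hb2
      obtain ⟨tl, htl⟩ := hpre
      have htl' : tl = w.drop (a0 + m) := by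
        rw [← htl]
        have hlen : (List.replicate a0 0 ++ M 0).length = a0 + m := by simp [hm]
        rw [← hlen, List.drop_left]
      rw [Finset.mem_filter, Fintype.mem_piFinset]
      constructor
      · intro i
        rw [Finset.mem_range, Nat.lt_succ_iff]
        refine Fin.cases ?_ ?_ i
        · simpa [Nat.lt_succ_iff] using hb1
        · intro j
          simp only [Fin.cons_succ]
          have := hpi' j
          rw [Finset.mem_range, Nat.lt_succ_iff, List.length_drop] at this
          omega
      · rw [interWord_succ]
        simp only [Fin.cons_zero, Fin.tail_cons]
        rw [hiw', ← htl', ← List.append_assoc]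
        exact htl
    · intro a _
      exact Fin.cons_self_tail a
    · rintro ⟨a0, a'⟩ _
      simp

lemma exists_sum_poly (p : Polynomial ℚ) :
    ∃ P : Polynomial ℚ, ∀ n : ℕ, P.eval (n : ℚ) = ∑ j ∈ Finset.range n, p.eval (j : ℚ) := by
  induction p using Polynomial.induction_on' with
  | add f g hf hg =>
    obtain ⟨Pf, hPf⟩ := hf
    obtain ⟨Pg, hPg⟩ := hg
    exact ⟨Pf + Pg, fun n => by
      simp [hPf n, hPg n, Finset.sum_add_distrib]⟩
  | monomial d a =>
    refine ⟨Polynomial.C a * ∑ i ∈ Finset.range (d+1),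
      Polynomial.C (bernoulli i * ((d+1).choose i) / (d+1)) * Polynomial.X^(d+1-i), fun n => ?_⟩
    have key := sum_range_pow n d
    simp only [Polynomial.eval_mul, Polynomial.eval_C, Polynomial.eval_finset_sum,
      Polynomial.eval_pow, Polynomial.eval_X, Polynomial.eval_monomial]
    rw [← Finset.mul_sum]
    congr 1
    rw [key]
    apply Finset.sum_congr rfl
    intro i _
    ring
lemma cnt_zpad_poly (q : ℕ) : ∀ (r : ℕ) (M : Fin r → List ℕ), (∀ i, (M i).length ≤ q) →
    ∀ (h : List ℕ), ∃ p : Polynomial ℚ, ∀ t : ℕ, q * r ≤ t →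
      (cnt r M (Z t ++ h) : ℚ) = p.eval (t : ℚ) := by
  intro r
  induction r with
  | zero =>
    intro M _ h
    refine ⟨Polynomial.C (if ∀ x ∈ h, x = 0 then 1 else 0), fun t _ => ?_⟩
    rw [cnt, Polynomial.eval_C]
    have hiff : (∀ x ∈ Z t ++ h, x = 0) ↔ (∀ x ∈ h, x = 0) := by
      constructor
      · intro hall x hx
        exact hall x (List.mem_append.mpr (Or.inr hx))
      · intro hall x hx
        rcases List.mem_append.mp hx with hx | hx
        · exact List.eq_of_mem_replicate hx
        · exact hall x hx
    by_cases hh : ∀ x ∈ h, x = 0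
    · rw [if_pos (hiff.mpr hh), if_pos hh]; norm_num
    · rw [if_neg (fun hc => hh (hiff.mp hc)), if_neg hh]; norm_num
  | succ r ih =>
    intro M hq h
    obtain ⟨p', hp'⟩ := ih (Fin.tail M) (fun i => hq i.succ) h
    obtain ⟨PS, hPS⟩ := exists_sum_poly p'
    set m := (M 0).length with hm
    have hmq : m ≤ q := hq 0
    set K1 : ℚ := ∑ j ∈ Finset.range (q * r), (cnt r (Fin.tail M) (Z j ++ h) : ℚ) with hK1
    set K2 : ℚ := ∑ k ∈ Finset.range (h.length + m),
      (if (Z (k+1) ++ M 0) <+: (Z m ++ h) then (cnt r (Fin.tail M) (h.drop (k+1)) : ℚ) else 0)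
      with hK2
    refine ⟨(if M 0 = Z m then
        (Polynomial.C K1 + PS.comp (Polynomial.X + Polynomial.C (1 - (m:ℚ)))
          - Polynomial.C (PS.eval ((q*r : ℕ) : ℚ))) else 0) + Polynomial.C K2, ?_⟩
    intro t ht
    have hq1 : q * (r+1) = q * r + q := Nat.mul_succ q r
    have hmt : m ≤ t := by omega
    set f : ℕ → ℚ := fun a0 => if (Z a0 ++ M 0) <+: (Z t ++ h)
      then (cnt r (Fin.tail M) ((Z t ++ h).drop (a0 + m)) : ℚ) else 0 with hf
    have hcast : (cnt (r+1) M (Z t ++ h) : ℚ)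
        = ∑ a0 ∈ Finset.range (t + h.length + 1), f a0 := by
      rw [cnt, Nat.cast_sum]
      have hlen : (Z t ++ h).length = t + h.length := by simp
      rw [hlen]
      refine Finset.sum_congr rfl (fun a0 _ => ?_)
      rw [hf]
      simp only [Z]
      split_ifs <;> simp [hm]
    have hsplit : ∑ a0 ∈ Finset.range (t + h.length + 1), f a0
        = (∑ a0 ∈ Finset.range (t - m + 1), f a0)
          + ∑ a0 ∈ Finset.Ico (t - m + 1) (t + h.length + 1), f a0 := by
      rw [Finset.range_eq_Ico,
        ← Finset.sum_Ico_consecutive f (Nat.zero_le _) (by omega : t - m + 1 ≤ t + h.length + 1),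
        Finset.range_eq_Ico]
    have hterm1 : ∑ a0 ∈ Finset.range (t - m + 1), f a0
        = if M 0 = Z m then
            (∑ j ∈ Finset.range (t - m + 1), (cnt r (Fin.tail M) (Z j ++ h) : ℚ)) else 0 := by
      by_cases hz : M 0 = Z m
      · rw [if_pos hz,
          ← Finset.sum_range_reflect (fun j => (cnt r (Fin.tail M) (Z j ++ h) : ℚ)) (t-m+1)]
        refine Finset.sum_congr rfl (fun a0 ha0 => ?_)
        rw [Finset.mem_range] at ha0
        have hcond : (Z a0 ++ M 0) <+: (Z t ++ h) := by
          rw [hz, ← List.replicate_add]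
          exact (rep_pref (by omega)).trans (List.prefix_append _ _)
        rw [hf]
        simp only [if_pos hcond]
        rw [drop_rep_le h (by omega : a0 + m ≤ t)]
        have he : t - (a0 + m) = t - m + 1 - 1 - a0 := by omega
        rw [he]
      · rw [if_neg hz]
        apply Finset.sum_eq_zero
        intro a0 ha0
        rw [Finset.mem_range] at ha0
        have hcond : ¬ ((Z a0 ++ M 0) <+: (Z t ++ h)) := by
          intro hcond
          apply hz
          have h1 : (Z a0 ++ M 0) <+: Z t := by
            rw [← pref_left (y := h) (by simp; omega)]
            exact hcond
          have h2 := pref_rep h1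
          rw [List.length_append, List.length_replicate] at h2
          have h3 : Z a0 ++ M 0 = Z a0 ++ Z m := by
            rw [h2, ← List.replicate_add]
          exact List.append_cancel_left h3
        rw [hf]
        simp only [if_neg hcond]
    have hterm1' : (∑ j ∈ Finset.range (t - m + 1), (cnt r (Fin.tail M) (Z j ++ h) : ℚ))
        = K1 + (PS.eval ((t - m + 1 : ℕ) : ℚ) - PS.eval ((q*r : ℕ) : ℚ)) := by
      rw [Finset.range_eq_Ico,
        ← Finset.sum_Ico_consecutive _ (Nat.zero_le (q*r)) (by omega : q*r ≤ t-m+1)]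
      congr 1
      · rw [hK1, Finset.range_eq_Ico]
      · have hco : ∀ j ∈ Finset.Ico (q*r) (t-m+1),
            (cnt r (Fin.tail M) (Z j ++ h) : ℚ) = p'.eval (j:ℚ) :=
          fun j hj => hp' j (Finset.mem_Ico.mp hj).1
        rw [Finset.sum_congr rfl hco, Finset.sum_Ico_eq_sub _ (by omega : q*r ≤ t-m+1),
          hPS, hPS]
    have hterm2 : ∑ a0 ∈ Finset.Ico (t - m + 1) (t + h.length + 1), f a0 = K2 := by
      rw [Finset.sum_Ico_eq_sum_range]
      have hcard : (t + h.length + 1) - (t - m + 1) = h.length + m := by omega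
      rw [hcard, hK2]
      refine Finset.sum_congr rfl (fun k hk => ?_)
      rw [Finset.mem_range] at hk
      have hidx : t - m + 1 + k = t - m + (k+1) := by omega
      have hcond : ((Z (t - m + 1 + k) ++ M 0) <+: (Z t ++ h))
          ↔ ((Z (k+1) ++ M 0) <+: (Z m ++ h)) := by
        have hsh := pref_shift_add (a := k+1) (t := m) (u := M 0) (h := h) (t - m)
        have e1 : k+1+(t-m) = t - m + 1 + k := by omega
        have e2 : m + (t-m) = t := by omega
        rw [e1, e2] at hsh
        exact hsh.symm
      rw [hf]
      by_cases hc2 : (Z (k+1) ++ M 0) <+: (Z m ++ h)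
      · simp only [if_pos (hcond.mpr hc2), if_pos hc2]
        have hd : t - m + 1 + k + m = t + (k+1) := by omega
        rw [hd, drop_rep]
      · simp only [if_neg (fun hcc => hc2 (hcond.mp hcc)), if_neg hc2]
    rw [hcast, hsplit, hterm1, hterm2]
    rw [Polynomial.eval_add, Polynomial.eval_C]
    congr 1
    by_cases hz : M 0 = Z m
    · rw [if_pos hz, if_pos hz, hterm1']
      rw [Polynomial.eval_sub, Polynomial.eval_add, Polynomial.eval_C, Polynomial.eval_C,
        Polynomial.eval_comp, Polynomial.eval_add, Polynomial.eval_X, Polynomial.eval_C]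
      have hcc : ((t - m + 1 : ℕ) : ℚ) = (t : ℚ) + (1 - (m : ℚ)) := by
        push_cast [Nat.cast_sub hmt]
        ring
      rw [hcc]
      ring
    · rw [if_neg hz, if_neg hz, Polynomial.eval_zero]
lemma cnt_poly (q : ℕ) : ∀ (r : ℕ) (M : Fin r → List ℕ), (∀ i, (M i).length ≤ q) →
    ∀ (g h : List ℕ) (c : ℕ), q * r < c →
      ∃ p : Polynomial ℚ, ∀ s : ℕ,
        (cnt r M (g ++ Z (s + c) ++ h) : ℚ) = p.eval (s : ℚ) := by
  intro r
  induction r with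
  | zero =>
    intro M _ g h c _
    refine ⟨Polynomial.C (if (∀ x ∈ g, x = 0) ∧ (∀ x ∈ h, x = 0) then 1 else 0), fun s => ?_⟩
    rw [cnt, Polynomial.eval_C]
    have hiff : (∀ x ∈ g ++ Z (s+c) ++ h, x = 0) ↔ ((∀ x ∈ g, x = 0) ∧ (∀ x ∈ h, x = 0)) := by
      constructor
      · intro hall
        constructor
        · intro x hx
          exact hall x (List.mem_append.mpr (Or.inl (List.mem_append.mpr (Or.inl hx))))
        · intro x hx
          exact hall x (List.mem_append.mpr (Or.inr hx))
      · rintro ⟨hg1, hg2⟩ x hx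
        rcases List.mem_append.mp hx with hx | hx
        · rcases List.mem_append.mp hx with hx | hx
          · exact hg1 x hx
          · exact List.eq_of_mem_replicate hx
        · exact hg2 x hx
    by_cases hgh : (∀ x ∈ g, x = 0) ∧ (∀ x ∈ h, x = 0)
    · rw [if_pos (hiff.mpr hgh), if_pos hgh]; norm_num
    · rw [if_neg (fun hc2 => hgh (hiff.mp hc2)), if_neg hgh]; norm_num
  | succ r ih =>
    intro M hq g h c hc
    set m := (M 0).length with hm
    have hmq : m ≤ q := hq 0
    have hq1 : q * (r+1) = q * r + q := Nat.mul_succ q r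
    by_cases hg : ∀ x ∈ g, x = 0
    · obtain ⟨p, hp⟩ := cnt_zpad_poly q (r+1) M hq h
      refine ⟨p.comp (Polynomial.X + Polynomial.C ((g.length : ℚ) + c)), fun s => ?_⟩
      have hgz : g = Z g.length := List.eq_replicate_iff.mpr ⟨rfl, hg⟩
      have hre : g ++ Z (s + c) ++ h = Z (g.length + (s + c)) ++ h := by
        conv_lhs => rw [hgz]
        rw [← List.replicate_add]
      rw [hre]
      rw [hp (g.length + (s + c)) (by omega : q * (r+1) ≤ g.length + (s+c))]
      rw [Polynomial.eval_comp, Polynomial.eval_add, Polynomial.eval_X, Polynomial.eval_C]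
      congr 1
      push_cast
      ring
    · have IH1 : ∀ a0 : ℕ, ∃ p : Polynomial ℚ, ∀ s : ℕ,
          (cnt r (Fin.tail M) (g.drop (a0 + m) ++ Z (s + c) ++ h) : ℚ) = p.eval (s : ℚ) :=
        fun a0 => ih (Fin.tail M) (fun i => hq i.succ) (g.drop (a0+m)) h c (by omega)
      choose P1 hP1 using IH1
      have IH2 : ∀ e : ℕ, ∃ p : Polynomial ℚ, ∀ s : ℕ,
          (cnt r (Fin.tail M) (Z (s + (c - min e m)) ++ h) : ℚ) = p.eval (s : ℚ) := by
        intro e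
        have hlt : q * r < c - min e m := by
          have : min e m ≤ m := min_le_right _ _
          omega
        have := ih (Fin.tail M) (fun i => hq i.succ) [] h (c - min e m) hlt
        simpa using this
      choose P2 hP2 using IH2
      refine ⟨∑ a0 ∈ Finset.range (g.length + 1),
        (if a0 + m ≤ g.length then
          (if (Z a0 ++ M 0) <+: g then P1 a0 else 0)
         else (if (Z a0 ++ M 0) <+: (g ++ Z m) then P2 (a0 + m - g.length) else 0)),
        fun s => ?_⟩
      set w := g ++ Z (s + c) ++ h with hw
      have hwlen : w.length = g.length + (s + c) + h.length := by rw [hw]; simp; omega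
      have hcast : (cnt (r+1) M w : ℚ)
          = ∑ a0 ∈ Finset.range (w.length + 1),
              (if (Z a0 ++ M 0) <+: w then (cnt r (Fin.tail M) (w.drop (a0 + m)) : ℚ)
                else 0) := by
        rw [cnt, Nat.cast_sum]
        refine Finset.sum_congr rfl (fun a0 _ => ?_)
        simp only [Z]
        split_ifs <;> simp [hm]
      have hvan : ∀ a0 ∈ Finset.range (w.length + 1), a0 ∉ Finset.range (g.length + 1) →
          (if (Z a0 ++ M 0) <+: w then (cnt r (Fin.tail M) (w.drop (a0 + m)) : ℚ) else 0)
            = 0 := by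
        intro a0 _ ha0
        rw [Finset.mem_range, Nat.lt_succ_iff, not_le] at ha0
        have hnp : ¬ ((Z a0 ++ M 0) <+: w) := by
          intro hpre
          apply hg
          have hga : g <+: Z a0 := by
            apply List.prefix_of_prefix_length_le (l₃ := w)
            · exact ⟨Z (s+c) ++ h, by rw [hw, List.append_assoc]⟩
            · exact ((List.prefix_append (Z a0) (M 0)).trans hpre)
            · simpa using le_of_lt ha0
          have hgr := pref_rep hga
          intro x hx
          rw [hgr] at hx
          exact List.eq_of_mem_replicate hx
        rw [if_neg hnp]
      rw [hcast, ← Finset.sum_subset (Finset.range_subset_range.mpr (by omega)) hvan]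
      rw [Polynomial.eval_finset_sum]
      refine Finset.sum_congr rfl (fun a0 ha0 => ?_)
      rw [Finset.mem_range, Nat.lt_succ_iff] at ha0
      by_cases h1 : a0 + m ≤ g.length
      · have hcond : ((Z a0 ++ M 0) <+: w) ↔ ((Z a0 ++ M 0) <+: g) := by
          rw [hw, List.append_assoc]
          exact pref_left (by simp [hm]; omega)
        have hdrop : w.drop (a0 + m) = g.drop (a0 + m) ++ Z (s + c) ++ h := by
          rw [hw]
          rw [List.drop_append_of_le_length (by simp; omega),
            List.drop_append_of_le_length (by omega : a0 + m ≤ g.length)]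
        rw [if_pos h1]
        by_cases hc1 : (Z a0 ++ M 0) <+: g
        · rw [if_pos (hcond.mpr hc1), if_pos hc1, hdrop, hP1 a0 s]
        · rw [if_neg (fun hcc => hc1 (hcond.mp hcc)), if_neg hc1, Polynomial.eval_zero]
      · set e := a0 + m - g.length with hedef
        have hcond : ((Z a0 ++ M 0) <+: w) ↔ ((Z a0 ++ M 0) <+: (g ++ Z m)) := by
          rw [hw]
          rw [pref_left (x := g ++ Z (s+c)) (y := h) (by simp; omega)]
          exact pref_pad_iff (by simp; omega) (by simp; omega)
        have hdrop : w.drop (a0 + m) = Z (s + (c - e)) ++ h := by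
          rw [hw, List.append_assoc]
          have hsp : a0 + m = g.length + e := by omega
          rw [hsp, List.drop_length_add_append (l₁ := g)]
          rw [drop_rep_le h (by omega : e ≤ s + c)]
          have hee : s + c - e = s + (c - e) := by omega
          rw [hee]
        rw [if_neg h1]
        by_cases hc2 : (Z a0 ++ M 0) <+: (g ++ Z m)
        · rw [if_pos (hcond.mpr hc2), if_pos hc2, hdrop]
          have hmin : min e m = e := by omega
          have hth := hP2 e s
          rw [hmin] at hth
          rw [hth]
        · rw [if_neg (fun hcc => hc2 (hcond.mp hcc)), if_neg hc2, Polynomial.eval_zero]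
end CentralCount

namespace CentralCount

lemma coeff_Fs (F : Type) [Field F] {r : ℕ} (M : Fin r → List ℕ) (t : ℕ) (b : ℕ) (bt : List ℕ) :
    coeffList F (Fs F M t) (b :: bt)
      = if (b :: bt).length = t + ∑ i, (M i).length then (cnt r M (b :: bt) : F) else 0 := by
  classical
  show (Fs F M t).coeff (FreeSemigroup.mk b bt) = _
  rw [Fs, MonoidAlgebra.coeff_sum, Finsupp.finset_sum_apply]
  have hterm : ∀ a : Fin (r+1) → ℕ, (xList F (interWord M a)).coeff (FreeSemigroup.mk b bt)
      = if interWord M a = b :: bt then (1:F) else 0 := by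
    intro a
    rcases hIW : interWord M a with _ | ⟨u, ut⟩
    · rw [xList]
      simp
    · rw [xList]
      rw [MonoidAlgebra.single_apply]
      have hiffe : (FreeSemigroup.mk u ut = FreeSemigroup.mk b bt) ↔ (u :: ut = b :: bt) := by
        constructor
        · intro hh
          injection hh with h1 h2
          rw [h1, h2]
        · intro hh
          injection hh with h1 h2
          rw [h1, h2]
      rw [if_congr hiffe rfl rfl]
  rw [Finset.sum_congr rfl (fun a _ => hterm a), Finset.sum_boole]
  by_cases hlen : (b :: bt).length = t + ∑ i, (M i).length
  · rw [if_pos hlen, ← card_eq_cnt r M (b :: bt)]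
    have hset : (Finset.Nat.antidiagonalTuple (r+1) t).filter (fun a => interWord M a = b :: bt)
        = (Fintype.piFinset (fun _ : Fin (r+1) => Finset.range ((b :: bt).length+1))).filter
            (fun a => interWord M a = b :: bt) := by
      ext a
      simp only [Finset.mem_filter, Finset.Nat.mem_antidiagonalTuple, Fintype.mem_piFinset,
        Finset.mem_range, Nat.lt_succ_iff]
      constructor
      · rintro ⟨_, hiw⟩
        exact ⟨fun i => comp_le hiw i, hiw⟩
      · rintro ⟨_, hiw⟩
        refine ⟨?_, hiw⟩
        have hli := length_interWord M a
        rw [hiw, hlen] at hli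
        omega
    rw [hset]
  · rw [if_neg hlen]
    have hempty : (Finset.Nat.antidiagonalTuple (r+1) t).filter
        (fun a => interWord M a = b :: bt) = ∅ := by
      rw [Finset.filter_eq_empty_iff]
      intro a ha hiw
      rw [Finset.Nat.mem_antidiagonalTuple] at ha
      apply hlen
      have hli := length_interWord M a
      rw [hiw, ha] at hli
      omega
    rw [hempty, Finset.card_empty, Nat.cast_zero]

end CentralCount


/-- If the central part of `u = g · y_1^c · h` satisfies `|C(u)| = c > qr`, then the
coefficient of `u^{(s)} = g · y_1^{s+c} · h` in `F_{s+n}(m_1, …, m_r)` is a polynomial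
in `s`. The hypotheses `hmax` and `hleft` say that `g ++ y_1^c ++ h` exhibits the
leftmost longest block of `y_1`'s of `u`, i.e. its central part. -/
theorem coeff_of_central_extension_polynomial (F : Type) [Field F] [CharZero F]
    (q r n : ℕ) (M : Fin r → List ℕ) (hM : ∀ i, M i ≠ [])
    (hMq : ∀ i, (M i).length ≤ q)
    (g h : List ℕ) (c : ℕ) (hc : q * r < c)
    (hmax : ∀ (g' h' : List ℕ) (c' : ℕ),
      g ++ List.replicate c 0 ++ h = g' ++ List.replicate c' 0 ++ h' → c' ≤ c)
    (hleft : ∀ g' h' : List ℕ,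
      g ++ List.replicate c 0 ++ h = g' ++ List.replicate c 0 ++ h' →
        g.length ≤ g'.length) :
    ∃ p : Polynomial F, ∀ s : ℕ,
      coeffList F (Fs F M (s + n)) (g ++ List.replicate (s + c) 0 ++ h) =
        Polynomial.eval (s : F) p := by
  classical
  obtain ⟨p, hp⟩ := CentralCount.cnt_poly q r M hMq g h c hc
  by_cases hd : g.length + c + h.length = n + ∑ i, (M i).length
  · refine ⟨p.map (algebraMap ℚ F), fun s => ?_⟩
    have hcne : g ++ List.replicate (s + c) 0 ++ h ≠ [] := by
      apply List.ne_nil_of_length_pos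
      simp
      omega
    obtain ⟨b, bt, hbt⟩ := List.exists_cons_of_ne_nil hcne
    rw [hbt, CentralCount.coeff_Fs, ← hbt]
    have hlen : (g ++ List.replicate (s+c) 0 ++ h).length = (s + n) + ∑ i, (M i).length := by
      simp
      omega
    rw [if_pos hlen]
    have hq' : (CentralCount.cnt r M (g ++ List.replicate (s+c) 0 ++ h) : ℚ)
        = p.eval (s : ℚ) := hp s
    calc ((CentralCount.cnt r M (g ++ List.replicate (s+c) 0 ++ h) : ℕ) : F)
        = algebraMap ℚ F ((CentralCount.cnt r M (g ++ List.replicate (s+c) 0 ++ h) : ℕ) : ℚ) := by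
          rw [map_natCast]
      _ = algebraMap ℚ F (p.eval (s : ℚ)) := by rw [hq']
      _ = Polynomial.eval ((s : ℕ) : F) (p.map (algebraMap ℚ F)) := by
          rw [Polynomial.eval_map, Polynomial.eval₂_at_natCast]
  · refine ⟨0, fun s => ?_⟩
    have hcne : g ++ List.replicate (s + c) 0 ++ h ≠ [] := by
      apply List.ne_nil_of_length_pos
      simp
      omega
    obtain ⟨b, bt, hbt⟩ := List.exists_cons_of_ne_nil hcne
    rw [hbt, CentralCount.coeff_Fs, ← hbt]
    have hlen : ¬ ((g ++ List.replicate (s+c) 0 ++ h).length = (s + n) + ∑ i, (M i).length) := by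
      simp
      omega
    rw [if_neg hlen, Polynomial.eval_zero]

end
end

section
/- Let P = P_n(m_1, ..., m_n) ∈ F⟨Y⟩ be a symmetric polynomial in monomials m_1,...,m_n, and let p > 0. If d is sufficiently large, then every monomial appearing with nonzero coefficient in P^{(d)} = P_{n+d}(m_1,...,m_n, y_1,...,y_1) (d copies of y_1) contains a submonomial of the form y_1^p. -/
noncomputable section

private lemma replicate_prefix_aux {p j : ℕ} (h : p ≤ j) (X : List ℕ) :
    List.replicate p 0 <+: List.replicate j 0 ++ X := by
  have h1 : List.replicate p 0 ++ List.replicate (j - p) 0 = List.replicate j 0 := by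
    rw [← List.replicate_add]; congr 1; omega
  exact List.IsPrefix.trans ⟨List.replicate (j - p) 0, h1⟩ (List.prefix_append _ _)

private lemma blocks_aux (p : ℕ) (hp : 0 < p) :
    ∀ (L : List (List ℕ)) (k j : ℕ),
      L.countP (fun b => !decide (b = [0])) ≤ k →
      k * p + p ≤ j + L.countP (fun b => decide (b = [0])) →
      List.replicate p 0 <:+: (List.replicate j 0 ++ L.flatten) := by
  intro L
  induction L with
  | nil =>
    intro k j hk hc
    simp only [List.countP_nil, Nat.add_zero] at hc
    exact (replicate_prefix_aux (le_trans (Nat.le_add_left p (k * p)) hc) _).isInfix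
  | cons b t ih =>
    intro k j hk hc
    by_cases hb : b = [0]
    · subst hb
      have h1 : List.replicate j 0 ++ ([0] :: t).flatten
          = List.replicate (j + 1) 0 ++ t.flatten := by
        simp [List.replicate_succ', List.flatten_cons]
      rw [h1]
      refine ih k (j + 1) ?_ ?_
      · simpa [List.countP_cons] using hk
      · rw [List.countP_cons_of_pos (p := fun b => decide (b = [0])) (a := [0]) (l := t) (by simp)] at hc
        omega
    · have hk1 : t.countP (fun b => !decide (b = [0])) + 1 ≤ k := by
        rwa [List.countP_cons_of_pos (p := fun b => !decide (b = [0])) (a := b) (l := t) (by simp [hb])] at hk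
      have hc1 : k * p + p ≤ j + t.countP (fun b => decide (b = [0])) := by
        rwa [List.countP_cons_of_neg (p := fun b => decide (b = [0])) (a := b) (l := t) (by simp [hb])] at hc
      rcases le_or_gt p j with h | h
      · exact (replicate_prefix_aux h _).isInfix
      · have hkpos : 1 ≤ k := le_trans (Nat.le_add_left 1 _) hk1
        have hmul : (k - 1) * p + p = k * p := by
          rw [Nat.sub_one_mul, Nat.sub_add_cancel (Nat.le_mul_of_pos_left p hkpos)]
        have h2 : List.replicate p 0 <:+: t.flatten := by
          have := ih (k - 1) 0 (by omega) (by omega)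
          simpa using this
        have h3 : t.flatten <:+: List.replicate j 0 ++ (b :: t).flatten := by
          rw [List.flatten_cons, ← List.append_assoc]
          exact (List.suffix_append _ _).isInfix
        exact h2.trans h3

private lemma finRange_map_perm {m : ℕ} (σ : Equiv.Perm (Fin m)) :
    ((List.finRange m).map σ).Perm (List.finRange m) := by
  refine List.Subperm.antisymm ?_ ?_
  · exact ((List.nodup_finRange m).map σ.injective).subperm (fun x _ => List.mem_finRange x)
  · refine (List.nodup_finRange m).subperm (fun x _ => ?_)
    exact List.mem_map.mpr ⟨σ.symm x, List.mem_finRange _, σ.apply_symm_apply x⟩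

private lemma countP_finRange_lt (n d : ℕ) :
    (List.finRange (n + d)).countP (fun i : Fin (n + d) => decide (i.val < n)) = n := by
  have h : (List.finRange (n + d)).countP (fun i : Fin (n + d) => decide (i.val < n))
      = (List.range (n + d)).countP (fun x => decide (x < n)) := by
    rw [← (List.ext_getElem (by simp) (fun i _ _ => by simp) :
      (List.finRange (n + d)).map Fin.val = List.range (n + d)), List.countP_map]; rfl
  rw [h, List.range_add, List.countP_append]
  have h1 : (List.range n).countP (fun x => decide (x < n)) = n := by
    rw [List.countP_eq_length.mpr (fun a ha => by simpa using List.mem_range.mp ha)]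
    exact List.length_range
  have h2 : ((List.range d).map (fun x => n + x)).countP (fun x => decide (x < n)) = 0 := by
    rw [List.countP_eq_zero]
    intro a ha
    rcases List.mem_map.mp ha with ⟨x, _, rfl⟩
    simp
  omega

private lemma countP_finRange_ge (n d : ℕ) :
    (List.finRange (n + d)).countP (fun i : Fin (n + d) => !decide (i.val < n)) = d := by
  have h2 := List.length_eq_countP_add_countP
    (fun i : Fin (n + d) => decide (i.val < n)) (l := List.finRange (n + d))
  have h3 : (List.finRange (n + d)).countP
        (fun a : Fin (n + d) => decide (¬(decide (a.val < n) = true)))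
      = (List.finRange (n + d)).countP (fun i : Fin (n + d) => !decide (i.val < n)) := by
    refine List.countP_congr (fun a _ => ?_)
    simp
  rw [List.length_finRange, countP_finRange_lt n d, h3] at h2
  omega


/-- For `d` large enough, every monomial of
`P^{(d)} = P_{n+d}(m_1, …, m_n, y_1, …, y_1)` contains a block `y_1^p`. -/
theorem monomials_contain_long_block (F : Type) [Field F] [CharZero F] (n p : ℕ)
    (hp : 0 < p) (M : Fin n → List ℕ) (hM : ∀ i, M i ≠ []) :
    ∃ D : ℕ, ∀ d : ℕ, D ≤ d → ∀ l : List ℕ,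
      coeffList F (Psym F (fun j : Fin (n + d) =>
        if h : (j : ℕ) < n then M ⟨j, h⟩ else [0])) l ≠ 0 →
      ∃ g h : List ℕ, l = g ++ List.replicate p 0 ++ h := by
  refine ⟨n * p + p, fun d hd l hl => ?_⟩
  set B : Fin (n + d) → List ℕ :=
    fun j => if h : (j : ℕ) < n then M ⟨j, h⟩ else [0] with hB
  match l with
  | [] => simp [coeffList] at hl
  | a :: t =>
    have hsum : (Psym F B).coeff (FreeSemigroup.mk a t) ≠ 0 := hl
    rw [Psym, MonoidAlgebra.coeff_sum, Finset.sum_apply'] at hsum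
    obtain ⟨σ, -, hσ⟩ := Finset.exists_ne_zero_of_sum_ne_zero hsum
    set L : List (List ℕ) := (List.finRange (n + d)).map (fun i => B (σ i)) with hL
    have hflat : a :: t = L.flatten := by
      rcases hLf : L.flatten with _ | ⟨a', t'⟩
      · rw [hLf] at hσ
        simp [xList] at hσ
      · rw [hLf] at hσ
        have hx : xList F (a' :: t') = MonoidAlgebra.single (FreeSemigroup.mk a' t') 1 := rfl
        rw [hx, MonoidAlgebra.single_apply] at hσ
        by_contra hne
        rw [if_neg (fun he : FreeSemigroup.mk a' t' = FreeSemigroup.mk a t => by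
          injection he with h1 h2; exact hne (by rw [h1, h2]))] at hσ
        exact hσ rfl
    have hperm := (finRange_map_perm σ).countP_eq
    have hcount1 : L.countP (fun b => !decide (b = [0])) ≤ n := by
      have step1 : L.countP (fun b => !decide (b = [0]))
          = ((List.finRange (n + d)).map σ).countP (fun i => !decide (B i = [0])) := by
        rw [hL, List.countP_map, List.countP_map]; rfl
      rw [step1, hperm]
      refine le_trans (List.countP_mono_left (fun i _ hi => ?_))
        (le_of_eq (countP_finRange_lt n d))
      by_contra hlt
      simp only [decide_eq_true_eq] at hlt
      rw [hB] at hi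
      simp only [dif_neg hlt] at hi
      simp at hi
    have hcount2 : d ≤ L.countP (fun b => decide (b = [0])) := by
      have step1 : L.countP (fun b => decide (b = [0]))
          = ((List.finRange (n + d)).map σ).countP (fun i => decide (B i = [0])) := by
        rw [hL, List.countP_map, List.countP_map]; rfl
      rw [step1, hperm]
      refine le_trans (le_of_eq (countP_finRange_ge n d).symm)
        (List.countP_mono_left (fun i _ hi => ?_))
      simp only [Bool.not_eq_true', decide_eq_false_iff_not] at hi
      rw [hB]
      simp [dif_neg hi]
    have hinfix : List.replicate p 0 <:+: L.flatten := by
      have := blocks_aux p hp L n 0 hcount1 (by omega)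
      simpa using this
    rw [← hflat] at hinfix
    rcases hinfix with ⟨g, h, hgh⟩
    exact ⟨g, h, hgh.symm⟩

end
end

section
/- Fix a partition λ of m, a Young tableau T of shape λ, and elements f_1, ..., f_l ∈ V_m (identified with F[S_m]). The following are equivalent: (i) e_T f_1, ..., e_T f_l are linearly independent in V_m; (iii) the polynomials Σ_{τ∈C_T} sgn(τ)·f_1(y_{i_{τ(1)}},...,y_{i_{τ(m)}}), ..., Σ_{τ∈C_T} sgn(τ)·f_l(y_{i_{τ(1)}},...,y_{i_{τ(m)}}) are linearly independent in F⟨Y⟩, where y_{i_j} = Sub^T(x_j) for j = 1,...,m. -/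
noncomputable section

/-- A partition of `m`: an antitone sequence of parts (indexed by `ℕ`, `0`-based),
vanishing from index `m` on, with total sum `m`. -/
structure Ptn (m : ℕ) where
  parts : ℕ → ℕ
  antitone : Antitone parts
  eventually_zero : ∀ i, m ≤ i → parts i = 0
  sum_eq : ∑ i ∈ Finset.range m, parts i = m

/-- The length (number of positive parts) of a partition. -/
def Ptn.length {m : ℕ} (l : Ptn m) : ℕ :=
  ((Finset.range m).filter fun i => 0 < l.parts i).card

/-- `λ^{(m'-m)}`: the partition of `m' ≥ m` obtained from `λ ⊢ m` by adding
`m' - m` boxes to the first row. -/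
def Ptn.der {m : ℕ} (l : Ptn m) (m' : ℕ) (h : m ≤ m') : Ptn m' where
  parts := fun i => if i = 0 then l.parts 0 + (m' - m) else l.parts i
  antitone := by
    intro i j hij
    by_cases hj : j = 0
    · have hi : i = 0 := by omega
      simp [hi, hj]
    · by_cases hi : i = 0
      · simp only [if_neg hj, hi, if_pos]
        exact le_trans (l.antitone (Nat.zero_le j)) (Nat.le_add_right _ _)
      · simp only [if_neg hj, if_neg hi]
        exact l.antitone hij
  eventually_zero := by
    intro i hi
    by_cases hi0 : i = 0
    · subst hi0
      have hm' : m' = 0 := Nat.le_zero.mp hi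
      have hm : m = 0 := by omega
      simp [l.eventually_zero 0 (by omega), hm, hm']
    · simp only [if_neg hi0]
      exact l.eventually_zero i (le_trans h hi)
  sum_eq := by
    have h1 : ∀ i ∈ Finset.range m', (if i = 0 then l.parts 0 + (m' - m) else l.parts i)
        = l.parts i + (if i = 0 then m' - m else 0) := by
      intro i _
      by_cases hi : i = 0 <;> simp [hi]
    rw [Finset.sum_congr rfl h1, Finset.sum_add_distrib]
    have h2 : ∑ i ∈ Finset.range m', l.parts i = m :=
      ((Finset.sum_subset (Finset.range_subset_range.2 h)
        (fun i _ hi => l.eventually_zero i (by simpa using hi))).symm).trans l.sum_eq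
    have h3 : (∑ i ∈ Finset.range m', if i = 0 then m' - m else 0) = m' - m := by
      rw [Finset.sum_ite_eq' (Finset.range m') 0 fun _ => m' - m]
      rcases Nat.eq_zero_or_pos m' with hm0 | hm0
      · subst hm0
        have hm : m = 0 := Nat.le_zero.mp h
        simp [hm]
      · simp [Finset.mem_range.mpr hm0]
    rw [h2, h3]
    omega

/-- A Young tableau of shape `λ ⊢ m`: an (injective, hence bijective) placement of the
entries `0, …, m-1` into the cells `(row, column)` of the Young diagram of `λ`. -/
structure Tabl {m : ℕ} (l : Ptn m) where
  pos : Fin m → ℕ × ℕ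
  inj : Function.Injective pos
  mem : ∀ k, (pos k).2 < l.parts (pos k).1

/-- `T^{(m'-m)}`: the tableau of shape `λ^{(m'-m)}` obtained from `T` by adjoining the
entries `m, …, m'-1` at the end of the first row. -/
def Tabl.der {m : ℕ} {l : Ptn m} (T : Tabl l) (m' : ℕ) (h : m ≤ m') : Tabl (l.der m' h) where
  pos := fun k => if hk : (k : ℕ) < m then T.pos ⟨k, hk⟩ else (0, l.parts 0 + ((k : ℕ) - m))
  inj := by
    intro a b hab
    by_cases ha : (a : ℕ) < m <;> by_cases hb : (b : ℕ) < m
    · simp only [dif_pos ha, dif_pos hb] at hab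
      have := T.inj hab
      exact Fin.ext (by simpa using congrArg Fin.val this)
    · exfalso
      simp only [dif_pos ha, dif_neg hb] at hab
      have h2 := T.mem ⟨a, ha⟩
      rw [hab] at h2
      simp at h2
    · exfalso
      simp only [dif_neg ha, dif_pos hb] at hab
      have h2 := T.mem ⟨b, hb⟩
      rw [← hab] at h2
      simp at h2
    · simp only [dif_neg ha, dif_neg hb, Prod.mk.injEq] at hab
      exact Fin.ext (by omega)
  mem := by
    intro k
    by_cases hk : (k : ℕ) < m
    · simp only [dif_pos hk]
      have hmem := T.mem ⟨k, hk⟩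
      show (T.pos ⟨k, hk⟩).2 < (if (T.pos ⟨k, hk⟩).1 = 0 then l.parts 0 + (m' - m)
        else l.parts (T.pos ⟨k, hk⟩).1)
      by_cases h0 : (T.pos ⟨k, hk⟩).1 = 0
      · rw [if_pos h0, ← h0]
        omega
      · rwa [if_neg h0]
    · simp only [dif_neg hk]
      show l.parts 0 + ((k : ℕ) - m) < (if (0 : ℕ) = 0 then l.parts 0 + (m' - m) else l.parts 0)
      rw [if_pos rfl]
      have := k.isLt
      omega


/-- The substitution `x_i ↦ x_{σ(i)}` on variable indices (`σ ∈ S_m`, fixing indices `≥ m`). -/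
def relabel (m : ℕ) (σ : Equiv.Perm (Fin m)) : ℕ → ℕ := fun i =>
  if h : i < m then (σ ⟨i, h⟩ : ℕ) else i

/-- The left action of `σ ∈ S_m` on `F⟨X⟩` by the substitution `x_i ↦ x_{σ(i)}`. -/
def permAct (F : Type) [Field F] {m : ℕ} (σ : Equiv.Perm (Fin m)) :
    FreeNA F →ₗ[F] FreeNA F :=
  MonoidAlgebra.mapDomainLinearMap F F (FreeSemigroup.map (relabel m σ))

/-- The row subgroup `R_T` of a tableau `T` (as a finset of permutations). -/
def rowPerms {m : ℕ} {l : Ptn m} (T : Tabl l) : Finset (Equiv.Perm (Fin m)) :=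
  Finset.univ.filter fun σ => ∀ k, (T.pos (σ k)).1 = (T.pos k).1

/-- The column subgroup `C_T` of a tableau `T` (as a finset of permutations). -/
def colPerms {m : ℕ} {l : Ptn m} (T : Tabl l) : Finset (Equiv.Perm (Fin m)) :=
  Finset.univ.filter fun σ => ∀ k, (T.pos (σ k)).2 = (T.pos k).2

/-- The Young symmetrizer `e_T = ∑_{σ ∈ R_T, τ ∈ C_T} sgn(τ)·στ`, as a linear operator
on `F⟨X⟩` (acting on multilinear polynomials by variable substitutions). -/
def eT (F : Type) [Field F] {m : ℕ} {l : Ptn m} (T : Tabl l) :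
    FreeNA F →ₗ[F] FreeNA F :=
  ∑ σ ∈ rowPerms T, ∑ τ ∈ colPerms T,
    ((Equiv.Perm.sign τ : ℤ) : F) • permAct F (σ * τ)

/-- The row index (= `y`-variable index) of the entry `j` in the tableau `T`. -/
def rowOfNat {m : ℕ} {l : Ptn m} (T : Tabl l) : ℕ → ℕ := fun j =>
  if h : j < m then (T.pos ⟨j, h⟩).1 else j

/-- The operator `f ↦ ∑_{τ ∈ C_T} sgn(τ) f(y_{i_{τ(1)}}, …, y_{i_{τ(m)}})`, where
`y_{i_j} = Sub^T(x_j)` is the variable indexed by the row of `j` in `T`. -/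
def bTact (F : Type) [Field F] {m : ℕ} {l : Ptn m} (T : Tabl l) :
    FreeNA F →ₗ[F] FreeNA F :=
  ∑ τ ∈ colPerms T, ((Equiv.Perm.sign τ : ℤ) : F) •
    MonoidAlgebra.mapDomainLinearMap F F
      (FreeSemigroup.map fun j => rowOfNat T (relabel m τ j))

section Aux

variable (F : Type) [Field F] {m : ℕ} {lam : Ptn m} (T : Tabl lam)

theorem fsmap_mk (g : ℕ → ℕ) (a : ℕ) (t : List ℕ) :
    FreeSemigroup.map g (FreeSemigroup.mk a t) = FreeSemigroup.mk (g a) (t.map g) := by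
  induction t generalizing a with
  | nil => rfl
  | cons b s ih =>
    have h1 : FreeSemigroup.mk a (b :: s) = FreeSemigroup.of a * FreeSemigroup.mk b s := rfl
    have h2 : FreeSemigroup.mk (g a) (g b :: s.map g)
        = FreeSemigroup.of (g a) * FreeSemigroup.mk (g b) (s.map g) := rfl
    rw [h1, map_mul, FreeSemigroup.map_of, ih, List.map_cons, h2]

theorem fsmap_comp (g h : ℕ → ℕ) :
    ⇑(FreeSemigroup.map (g ∘ h)) = ⇑(FreeSemigroup.map g) ∘ ⇑(FreeSemigroup.map h) := by
  funext w
  cases w with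
  | mk a t => simp [fsmap_mk, Function.comp]

theorem mapDomain_xList (g : ℕ → ℕ) (L : List ℕ) :
    MonoidAlgebra.mapDomain (⇑(FreeSemigroup.map g)) (xList F L) = xList F (L.map g) := by
  cases L with
  | nil =>
    show MonoidAlgebra.mapDomain _ (0 : FreeNA F) = (0 : FreeNA F)
    exact MonoidAlgebra.mapDomain_zero _
  | cons a t =>
    show MonoidAlgebra.mapDomain _ (MonoidAlgebra.single _ 1) = MonoidAlgebra.single _ 1
    rw [MonoidAlgebra.mapDomain_single, fsmap_mk]

theorem mapDomain_fsmap (g h : ℕ → ℕ) (x : FreeNA F) :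
    MonoidAlgebra.mapDomain (⇑(FreeSemigroup.map g)) (MonoidAlgebra.mapDomain (⇑(FreeSemigroup.map h)) x)
      = MonoidAlgebra.mapDomain (⇑(FreeSemigroup.map (g ∘ h))) x := by
  rw [fsmap_comp]
  exact congrArg MonoidAlgebra.ofCoeff Finsupp.mapDomain_comp.symm

theorem relabel_mul (σ τ : Equiv.Perm (Fin m)) :
    relabel m (σ * τ) = relabel m σ ∘ relabel m τ := by
  funext j
  by_cases h : j < m
  · simp [relabel, h, Equiv.Perm.mul_apply]
  · simp [relabel, h]

theorem permAct_mul_apply (σ τ : Equiv.Perm (Fin m)) (x : FreeNA F) :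
    permAct F σ (permAct F τ x) = permAct F (σ * τ) x := by
  show MonoidAlgebra.mapDomain (⇑(FreeSemigroup.map (relabel m σ)))
      (MonoidAlgebra.mapDomain (⇑(FreeSemigroup.map (relabel m τ))) x)
    = MonoidAlgebra.mapDomain (⇑(FreeSemigroup.map (relabel m (σ * τ)))) x
  rw [mapDomain_fsmap, relabel_mul]

/-- The substitution map `Sub^T`. -/
noncomputable def SubT : FreeNA F →ₗ[F] FreeNA F :=
  MonoidAlgebra.mapDomainLinearMap F F (⇑(FreeSemigroup.map (rowOfNat T)))

theorem mem_rowPerms {σ : Equiv.Perm (Fin m)} :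
    σ ∈ rowPerms T ↔ ∀ k, (T.pos (σ k)).1 = (T.pos k).1 := by
  simp [rowPerms]

theorem one_mem_rowPerms : (1 : Equiv.Perm (Fin m)) ∈ rowPerms T :=
  (mem_rowPerms T).2 fun _ => rfl

theorem mul_mem_rowPerms {σ τ : Equiv.Perm (Fin m)} (hσ : σ ∈ rowPerms T)
    (hτ : τ ∈ rowPerms T) : σ * τ ∈ rowPerms T := by
  rw [mem_rowPerms] at *
  intro k
  rw [Equiv.Perm.mul_apply, hσ, hτ]

theorem inv_mem_rowPerms {σ : Equiv.Perm (Fin m)} (hσ : σ ∈ rowPerms T) :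
    σ⁻¹ ∈ rowPerms T := by
  rw [mem_rowPerms] at *
  intro k
  conv_rhs => rw [← show σ (σ⁻¹ k) = k from by simp, hσ]

theorem rowOfNat_comp (σ τ : Equiv.Perm (Fin m)) (hσ : σ ∈ rowPerms T) :
    rowOfNat T ∘ relabel m (σ * τ) = (fun j => rowOfNat T (relabel m τ j)) := by
  funext j
  by_cases h : j < m
  · simp only [Function.comp, relabel, dif_pos h, rowOfNat, Fin.is_lt, dif_pos, Fin.eta,
      Equiv.Perm.mul_apply]
    exact (mem_rowPerms T).1 hσ _
  · simp [Function.comp, relabel, rowOfNat, h]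

theorem SubT_permAct (σ τ : Equiv.Perm (Fin m)) (hσ : σ ∈ rowPerms T) (x : FreeNA F) :
    SubT F T (permAct F (σ * τ) x)
      = MonoidAlgebra.mapDomainLinearMap F F
          (⇑(FreeSemigroup.map fun j => rowOfNat T (relabel m τ j))) x := by
  show MonoidAlgebra.mapDomain (⇑(FreeSemigroup.map (rowOfNat T)))
      (MonoidAlgebra.mapDomain (⇑(FreeSemigroup.map (relabel m (σ * τ)))) x)
    = MonoidAlgebra.mapDomain (⇑(FreeSemigroup.map fun j => rowOfNat T (relabel m τ j))) x
  rw [mapDomain_fsmap, rowOfNat_comp T σ τ hσ]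

theorem bTact_apply (x : FreeNA F) :
    bTact F T x = ∑ τ ∈ colPerms T, ((Equiv.Perm.sign τ : ℤ) : F) •
      MonoidAlgebra.mapDomainLinearMap F F
        (⇑(FreeSemigroup.map fun j => rowOfNat T (relabel m τ j))) x := by
  refine (LinearMap.sum_apply _ _ _).trans (Finset.sum_congr rfl fun τ _ => ?_)
  exact LinearMap.smul_apply _ _ _

theorem SubT_eT_apply (x : FreeNA F) :
    SubT F T (eT F T x) = ((rowPerms T).card : F) • bTact F T x := by
  rw [eT]
  simp only [LinearMap.sum_apply, LinearMap.smul_apply, map_sum, map_smul]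
  have h1 : ∀ σ ∈ rowPerms T,
      ∑ τ ∈ colPerms T, ((Equiv.Perm.sign τ : ℤ) : F) • SubT F T (permAct F (σ * τ) x)
        = bTact F T x := by
    intro σ hσ
    rw [bTact_apply]
    exact Finset.sum_congr rfl fun τ _ =>
      congrArg (fun z => ((Equiv.Perm.sign τ : ℤ) : F) • z) (SubT_permAct F T σ τ hσ x)
  rw [Finset.sum_congr rfl h1, Finset.sum_const, ← Nat.cast_smul_eq_nsmul F]

theorem permAct_eT_apply {σ' : Equiv.Perm (Fin m)} (hσ' : σ' ∈ rowPerms T) (x : FreeNA F) :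
    permAct F σ' (eT F T x) = eT F T x := by
  rw [eT]
  simp only [LinearMap.sum_apply, LinearMap.smul_apply, map_sum, map_smul]
  have h1 : ∀ σ ∈ rowPerms T, ∑ τ ∈ colPerms T,
      ((Equiv.Perm.sign τ : ℤ) : F) • permAct F σ' (permAct F (σ * τ) x)
        = ∑ τ ∈ colPerms T, ((Equiv.Perm.sign τ : ℤ) : F) • permAct F ((σ' * σ) * τ) x := by
    intro σ _
    refine Finset.sum_congr rfl fun τ _ => ?_
    rw [permAct_mul_apply, mul_assoc]
  rw [Finset.sum_congr rfl h1]
  refine Finset.sum_equiv (Equiv.mulLeft σ') (fun σ => ?_) (fun σ hσ => ?_)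
  · simp only [Equiv.coe_mulLeft]
    constructor
    · intro hσ
      exact mul_mem_rowPerms T hσ' hσ
    · intro hσ
      have h2 := mul_mem_rowPerms T (inv_mem_rowPerms T hσ') hσ
      rwa [inv_mul_cancel_left] at h2
  · simp only [Equiv.coe_mulLeft]

/-- The row symmetrizer. -/
noncomputable def rhoT : FreeNA F →ₗ[F] FreeNA F :=
  ∑ σ ∈ rowPerms T, permAct F σ

theorem rhoT_eT_apply (x : FreeNA F) :
    rhoT F T (eT F T x) = ((rowPerms T).card : F) • eT F T x := by
  rw [rhoT]
  simp only [LinearMap.sum_apply]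
  rw [Finset.sum_congr rfl fun σ hσ => permAct_eT_apply F T hσ x, Finset.sum_const,
    Nat.cast_smul_eq_nsmul F]

/-- The generator of `Vm` attached to `π`. -/
noncomputable def genV (π : Equiv.Perm (Fin m)) : FreeNA F :=
  xList F ((List.finRange m).map fun j => (π j : ℕ))

theorem permAct_genV (σ π : Equiv.Perm (Fin m)) :
    permAct F σ (genV F π) = genV F (σ * π) := by
  show MonoidAlgebra.mapDomain (⇑(FreeSemigroup.map (relabel m σ)))
      (xList F ((List.finRange m).map fun j => (π j : ℕ))) = genV F (σ * π)
  rw [mapDomain_xList, genV, List.map_map]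
  congr 2
  funext j
  simp [relabel, Function.comp, Equiv.Perm.mul_apply]

theorem permAct_mem_Vm (σ : Equiv.Perm (Fin m)) {x : FreeNA F} (hx : x ∈ Vm F m) :
    permAct F σ x ∈ Vm F m := by
  induction hx using Submodule.span_induction with
  | mem y hy =>
    obtain ⟨π, rfl⟩ := hy
    show permAct F σ (genV F π) ∈ Vm F m
    rw [permAct_genV]
    exact Submodule.subset_span ⟨σ * π, rfl⟩
  | zero => simp
  | add y z _ _ hy hz => rw [map_add]; exact Submodule.add_mem _ hy hz
  | smul c y _ hy => rw [map_smul]; exact Submodule.smul_mem _ _ hy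

theorem eT_mem_Vm {x : FreeNA F} (hx : x ∈ Vm F m) : eT F T x ∈ Vm F m := by
  rw [eT]
  simp only [LinearMap.sum_apply, LinearMap.smul_apply]
  exact Submodule.sum_mem _ fun σ _ => Submodule.sum_mem _ fun τ _ =>
    Submodule.smul_mem _ _ (permAct_mem_Vm F _ hx)

open Classical in
/-- The multilinearization retraction `Ψ`. -/
noncomputable def psiT : FreeNA F →ₗ[F] FreeNA F :=
  Finsupp.linearCombination F (fun w : FreeSemigroup ℕ =>
    ∑ π ∈ Finset.univ.filter
        (fun π : Equiv.Perm (Fin m) => SubT F T (genV F π) = MonoidAlgebra.single w 1),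
      genV F π) ∘ₗ (MonoidAlgebra.coeffLinearEquiv F : FreeNA F ≃ₗ[F] _).toLinearMap

open Classical in
theorem psiT_single (w : FreeSemigroup ℕ) :
    psiT F T (MonoidAlgebra.single w (1 : F))
      = ∑ π ∈ Finset.univ.filter
          (fun π : Equiv.Perm (Fin m) => SubT F T (genV F π) = MonoidAlgebra.single w 1),
        genV F π := by
  show Finsupp.linearCombination F (fun w : FreeSemigroup ℕ =>
      ∑ π ∈ Finset.univ.filter
          (fun π : Equiv.Perm (Fin m) => SubT F T (genV F π) = MonoidAlgebra.single w 1),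
        genV F π) (Finsupp.single w 1) = _
  rw [Finsupp.linearCombination_single, one_smul]

theorem SubT_genV (π : Equiv.Perm (Fin m)) :
    SubT F T (genV F π)
      = xList F ((List.finRange m).map fun j => (T.pos (π j)).1) := by
  show MonoidAlgebra.mapDomain (⇑(FreeSemigroup.map (rowOfNat T)))
      (xList F ((List.finRange m).map fun j => (π j : ℕ))) = _
  rw [mapDomain_xList, List.map_map]
  congr 2
  funext j
  simp [rowOfNat, Function.comp]

theorem xList_inj {L L' : List ℕ} (hL : L ≠ []) (hL' : L' ≠ [])
    (h : xList F L = xList F L') : L = L' := by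
  cases L with
  | nil => exact absurd rfl hL
  | cons a t =>
    cases L' with
    | nil => exact absurd rfl hL'
    | cons a' t' =>
      have h3 : MonoidAlgebra.single (FreeSemigroup.mk a t) (1 : F)
          = MonoidAlgebra.single (FreeSemigroup.mk a' t') (1 : F) := h
      have h2 : FreeSemigroup.mk a t = FreeSemigroup.mk a' t' :=
        (MonoidAlgebra.single_left_inj one_ne_zero).1 h3
      have h4 : a = a' := congrArg FreeSemigroup.head h2
      have h5 : t = t' := congrArg FreeSemigroup.tail h2
      rw [h4, h5]

theorem SubT_genV_eq_iff (π π' : Equiv.Perm (Fin m)) :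
    SubT F T (genV F π') = SubT F T (genV F π) ↔
      ∀ k, (T.pos (π' k)).1 = (T.pos (π k)).1 := by
  rw [SubT_genV, SubT_genV]
  constructor
  · intro h k
    have hm : 0 < m := k.pos
    have hne : ((List.finRange m).map fun j => (T.pos (π' j)).1) ≠ [] := by
      intro hcon
      have := congrArg List.length hcon
      simp at this
      omega
    have hne' : ((List.finRange m).map fun j => (T.pos (π j)).1) ≠ [] := by
      intro hcon
      have := congrArg List.length hcon
      simp at this
      omega
    have hLL := xList_inj F hne hne' h
    exact List.map_inj_left.1 hLL k (List.mem_finRange k)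
  · intro h
    exact congrArg (xList F) (List.map_inj_left.2 fun k _ => h k)

theorem psiT_SubT_genV (π : Equiv.Perm (Fin m)) :
    psiT F T (SubT F T (genV F π)) = rhoT F T (genV F π) := by
  classical
  rcases Nat.eq_zero_or_pos m with hm | hm
  · subst hm
    have hg : genV F π = 0 := by
      rw [genV]
      simp only [List.finRange_zero, List.map_nil]
      rfl
    rw [hg, map_zero, map_zero, map_zero]
  · obtain ⟨a, t, hat⟩ : ∃ a t, ((List.finRange m).map fun j => (T.pos (π j)).1) = a :: t := by
      cases hL : (List.finRange m).map fun j => (T.pos (π j)).1 with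
      | nil =>
        exfalso
        have := congrArg List.length hL
        simp at this
        omega
      | cons a t => exact ⟨a, t, rfl⟩
    have hsub : SubT F T (genV F π) = MonoidAlgebra.single (FreeSemigroup.mk a t) (1 : F) := by
      rw [SubT_genV F T π, hat]
      rfl
    rw [hsub, psiT_single, rhoT]
    simp only [LinearMap.sum_apply]
    rw [Finset.sum_congr rfl fun σ _ => permAct_genV F σ π]
    refine (Finset.sum_equiv (Equiv.mulRight π) (fun σ => ?_) (fun σ hσ => ?_)).symm
    · simp only [Equiv.coe_mulRight, Finset.mem_filter, Finset.mem_univ, true_and]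
      rw [← hsub, SubT_genV_eq_iff, mem_rowPerms]
      constructor
      · intro hσ k
        exact hσ (π k)
      · intro h k
        simpa using h (π⁻¹ k)
    · rfl

theorem psiT_SubT (x : FreeNA F) (hx : x ∈ Vm F m) :
    psiT F T (SubT F T x) = rhoT F T x := by
  induction hx using Submodule.span_induction with
  | mem y hy =>
    obtain ⟨π, rfl⟩ := hy
    exact psiT_SubT_genV F T π
  | zero => simp
  | add y z _ _ hy hz => simp only [map_add, hy, hz]
  | smul c y _ hy => simp only [map_smul, hy]

end Aux


/-- Regev's criterion: `e_T f_1, …, e_T f_l` are linearly independent iff the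
substituted alternating sums `∑_{τ ∈ C_T} sgn(τ) f_i(y_{i_{τ(1)}}, …, y_{i_{τ(m)}})`
are linearly independent. -/
theorem eT_linearIndependent_iff_substituted (F : Type) [Field F] [CharZero F]
    (m : ℕ) (lam : Ptn m) (T : Tabl lam) (l : ℕ) (f : Fin l → FreeNA F)
    (hf : ∀ i, f i ∈ Vm F m) :
    LinearIndependent F (fun i => eT F T (f i)) ↔
      LinearIndependent F (fun i => bTact F T (f i)) := by
  classical
  set c : F := ((rowPerms T).card : F) with hcdef
  have hc0 : c ≠ 0 := by
    have h1 : 0 < (rowPerms T).card := Finset.card_pos.2 ⟨1, one_mem_rowPerms T⟩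
    exact Nat.cast_ne_zero.2 h1.ne'
  have h2 : ∀ i, psiT F T (bTact F T (f i)) = eT F T (f i) := by
    intro i
    have e1 : psiT F T (SubT F T (eT F T (f i))) = rhoT F T (eT F T (f i)) :=
      psiT_SubT F T _ (eT_mem_Vm F T (hf i))
    rw [SubT_eT_apply, rhoT_eT_apply, map_smul] at e1
    exact smul_right_injective _ hc0 e1
  constructor
  · intro h
    refine LinearIndependent.of_comp (psiT F T) ?_
    have he : (⇑(psiT F T) ∘ fun i => bTact F T (f i)) = fun i => eT F T (f i) := by
      funext i
      exact h2 i
    rwa [he]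
  · intro h
    refine LinearIndependent.of_comp (c⁻¹ • SubT F T) ?_
    have he : (⇑(c⁻¹ • SubT F T) ∘ fun i => eT F T (f i)) = fun i => bTact F T (f i) := by
      funext i
      simp only [Function.comp_apply, LinearMap.smul_apply]
      rw [SubT_eT_apply, ← hcdef, inv_smul_smul₀ hc0]
    rwa [he]

end
end
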